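/- arXiv:1910.04258 — 8 statements merged into one kernel-verified Lean document; each statement's English description precedes it below -/
import Mathlib

section
/- For all n ≥ 1, the signed Eulerian polynomial identity holds: ∑_{w ∈ S_n} sgn(w) t^{des(w)+1} = (1-t)^{n+1} ∑_{k ≥ 1} k^{⌈n/2⌉} t^k as formal power series in t. -/
open scoped Classical

/-- Number of descents of a permutation of `{0,…,n-1}`. -/
noncomputable def desA {n : ℕ} (w : Equiv.Perm (Fin n)) : ℕ :=
  ((Finset.range (n - 1)).filter (fun i =>
    ∃ h : i + 1 < n, w ⟨i + 1, h⟩ < w ⟨i, Nat.lt_of_succ_lt h⟩)).card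

/-!
Multiplying by `(1 - t)⁻¹ ^ (n + 1) = ∑ C(n + j, n) t ^ j`, the identity says that for every `K`,
`∑_w sgn(w) C(K - des(w) - 1 + n, n) = K ^ ⌈n/2⌉`. The binomial coefficient counts the
`g : [n] → [K]` whose stable sorting permutation is `w`: writing `a = g ∘ w`, these are the `a`
that increase weakly, and strictly at the descents of `w`, and `a ↦ a + (ascents before ·)` maps
them bijectively onto the strictly increasing maps `[n] → [K + n - 1 - des(w)]`. So the left side
is `∑_g sgn(sort g)`. Exchanging the two values of `g` on the first block `{2b, 2b + 1}` where
they differ reverses the sign of `sort g`, so only the `g` constant on every block survive; their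
inversions come in pairs, so `sort g` is even, and there are `K ^ ⌈n/2⌉` of them.
-/

open Finset Equiv Equiv.Perm

theorem Equiv.swap_lt_swap_of_adjacent {n : ℕ} {x y a b : Fin n} (hxy : (y : ℕ) = x + 1)
    (hab : a < b) (hne : ¬(a = x ∧ b = y)) : swap x y a < swap x y b := by
  rw [swap_apply_def, swap_apply_def, Fin.lt_def]
  rw [Fin.lt_def] at hab
  split_ifs <;> simp_all [Fin.ext_iff] <;> omega

namespace Tuple

variable {α : Type*} [LinearOrder α] {n : ℕ}

theorem eq_sort_iff_strictMono_toLex {σ : Perm (Fin n)} {g : Fin n → α} :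
    σ = sort g ↔ StrictMono (fun i => toLex (g (σ i), σ i)) :=
  eq_sort_iff'

theorem sort_inv_lt_sort_inv_iff (g : Fin n → α) (p q : Fin n) :
    (sort g)⁻¹ p < (sort g)⁻¹ q ↔ toLex (g p, p) < toLex (g q, q) := by
  simpa using (((eq_sort_iff_strictMono_toLex (g := g)).1 rfl).lt_iff_lt
    (a := (sort g)⁻¹ p) (b := (sort g)⁻¹ q)).symm

theorem sign_sort_eq_prod (g : Fin n → α) :
    sign (sort g) = ∏ q, ∏ p ∈ Iio q, if g p ≤ g q then 1 else -1 := by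
  rw [← sign_inv, sign_eq_prod_prod_Iio]
  refine prod_congr rfl fun q _ => prod_congr rfl fun p hp => ?_
  have hpq : p < q := mem_Iio.1 hp
  simp only [sort_inv_lt_sort_inv_iff, Prod.Lex.toLex_lt_toLex, hpq, and_true,
    ← le_iff_lt_or_eq]

theorem sort_comp_swap {g : Fin n → α} {x y : Fin n} (hxy : (y : ℕ) = x + 1) (hne : g x ≠ g y) :
    sort (g ∘ swap x y) = (sort g).trans (swap x y) := by
  have hcomp : ∀ k, (g ∘ swap x y) ((sort g).trans (swap x y) k) = g (sort g k) := by
    simp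
  refine (eq_sort_iff.2 ⟨?_, fun i j hij hval => ?_⟩).symm
  · simpa [Function.comp_def, hcomp] using monotone_sort g
  · rw [hcomp, hcomp] at hval
    refine swap_lt_swap_of_adjacent hxy ((eq_sort_iff.1 rfl).2 i j hij hval) ?_
    rintro ⟨hi, hj⟩
    exact hne (by rw [← hi, ← hj, hval])

theorem sign_sort_comp_swap {g : Fin n → α} {x y : Fin n} (hxy : (y : ℕ) = x + 1)
    (hne : g x ≠ g y) : sign (sort (g ∘ swap x y)) = -sign (sort g) := by
  rw [sort_comp_swap hxy hne, ← Perm.mul_def, Perm.sign_mul,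
    sign_swap (by simp [Fin.ext_iff, hxy]), neg_one_mul]

end Tuple

open Tuple

section PairedFunctions

variable {α : Type*} [LinearOrder α] {n : ℕ}

def IsPaired (g : Fin n → α) : Prop :=
  ∀ p q : Fin n, (p : ℕ) / 2 = q / 2 → g p = g q

theorem sign_sort_of_isPaired {g : Fin n → α} (hg : IsPaired g) : sign (sort g) = 1 := by
  rw [sign_sort_eq_prod]
  refine prod_eq_one fun q _ => ?_
  have hq := q.isLt
  have hlt {p : Fin n} (hp : p ∈ Iio q) : (p : ℕ) < q := Fin.lt_def.1 (mem_Iio.1 hp)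
  -- pair `p` with the other element `p xor 1` of its block, unless that block is the one of `q`
  refine prod_involution
    (fun p _ => if h : (p : ℕ) / 2 < q / 2 then ⟨p + 1 - 2 * (p % 2), by omega⟩ else p)
    (fun p hp => ?_) (fun p hp hne => ?_) (fun p hp => ?_) (fun p hp => ?_)
  · have hpq := hlt hp
    by_cases h : (p : ℕ) / 2 < q / 2
    · rw [dif_pos h, hg ⟨p + 1 - 2 * (p % 2), _⟩ p (by dsimp only; omega), Int.units_mul_self]
    · rw [dif_neg h, hg p q (by omega), if_pos le_rfl, one_mul]
  · have hpq := hlt hp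
    have h : (p : ℕ) / 2 < q / 2 := by
      by_contra h
      exact hne (by rw [hg p q (by omega), if_pos le_rfl])
    rw [dif_pos h, Ne, Fin.ext_iff]
    dsimp only
    omega
  · have hpq := hlt hp
    split_ifs with h
    · simp only [mem_Iio, Fin.lt_def]
      omega
    · exact hp
  · have hp' := p.isLt
    by_cases h : (p : ℕ) / 2 < q / 2
    · rw [dif_pos h, dif_pos (by dsimp only; omega)]
      ext
      dsimp only
      omega
    · rw [dif_neg h, dif_neg h]

theorem card_isPaired [Fintype α] :
    #{g : Fin n → α | IsPaired g} = Fintype.card α ^ ((n + 1) / 2) := by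
  set half : Fin n → Fin ((n + 1) / 2) := fun p => ⟨p / 2, by omega⟩
  have hsurj : Function.Surjective half := fun b => ⟨⟨2 * b, by omega⟩, by ext; simp [half]⟩
  have himage : ({g : Fin n → α | IsPaired g} : Finset _) = univ.image (fun h => h ∘ half) := by
    ext g
    simp only [mem_filter, mem_univ, true_and, mem_image]
    constructor
    · intro hg
      refine ⟨fun b => g ⟨2 * b, by omega⟩, funext fun p => hg _ _ ?_⟩
      simp only [half]
      omega
    · rintro ⟨h, rfl⟩ p q hpq
      simp only [Function.comp_apply, half, hpq]
  rw [himage, card_image_of_injective _ hsurj.injective_comp_right, card_univ, Fintype.card_fun,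
    Fintype.card_fin]

def blockStart (p : Fin n) : Fin n := ⟨2 * (p / 2), by omega⟩

def mismatches (g : Fin n → α) : Finset (Fin n) := {p | g (blockStart p) ≠ g p}

theorem val_eq_blockStart_add_one {g : Fin n → α} {p : Fin n} (hp : p ∈ mismatches g) :
    (p : ℕ) = blockStart p + 1 := by
  have hne : blockStart p ≠ p := fun h => (mem_filter.1 hp).2 (by rw [h])
  simp only [blockStart, Ne, Fin.ext_iff] at hne ⊢
  omega

theorem isPaired_iff_mismatches_eq_empty {g : Fin n → α} : IsPaired g ↔ mismatches g = ∅ := by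
  simp only [mismatches, filter_eq_empty_iff, mem_univ, true_implies, not_not]
  refine ⟨fun hg p => hg _ _ (by simp only [blockStart]; omega), fun hg p q hpq => ?_⟩
  have hblock : blockStart p = blockStart q := by simp [blockStart, hpq]
  rw [← @hg p, ← @hg q, hblock]

theorem mismatches_comp_swap (g : Fin n → α) {p₀ : Fin n} (hp₀ : (p₀ : ℕ) = blockStart p₀ + 1) :
    mismatches (g ∘ swap (blockStart p₀) p₀) = mismatches g := by
  ext p
  simp only [mismatches, mem_filter, mem_univ, true_and, Function.comp_apply]
  by_cases hp : (p : ℕ) / 2 = p₀ / 2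
  · have hbp : blockStart p = blockStart p₀ := by simp [blockStart, hp]
    obtain rfl | rfl : p = blockStart p₀ ∨ p = p₀ := by
      simp only [blockStart, Fin.ext_iff] at hp₀ ⊢
      omega
    · simp [hbp]
    · rw [swap_apply_left, swap_apply_right, ne_comm]
  · simp only [blockStart] at hp₀
    rw [swap_apply_of_ne_of_ne, swap_apply_of_ne_of_ne] <;>
      simp only [blockStart, Ne, Fin.ext_iff] <;> omega

noncomputable def swapFirstMismatch (g : Fin n → α) : Fin n → α :=
  if h : (mismatches g).Nonempty then
    g ∘ swap (blockStart ((mismatches g).min' h)) ((mismatches g).min' h)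
  else g

theorem swapFirstMismatch_of_nonempty {g : Fin n → α} (h : (mismatches g).Nonempty) :
    swapFirstMismatch g = g ∘ swap (blockStart ((mismatches g).min' h)) ((mismatches g).min' h) :=
  dif_pos h

theorem swapFirstMismatch_of_empty {g : Fin n → α} (h : mismatches g = ∅) :
    swapFirstMismatch g = g :=
  dif_neg (by simp [h])

theorem mismatches_swapFirstMismatch (g : Fin n → α) :
    mismatches (swapFirstMismatch g) = mismatches g := by
  obtain h | h := (mismatches g).eq_empty_or_nonempty
  · rw [swapFirstMismatch_of_empty h]
  · rw [swapFirstMismatch_of_nonempty h]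
    exact mismatches_comp_swap g (val_eq_blockStart_add_one (min'_mem _ h))

theorem swapFirstMismatch_involutive :
    Function.Involutive (swapFirstMismatch (α := α) (n := n)) := by
  intro g
  have e := mismatches_swapFirstMismatch g
  obtain h | h := (mismatches g).eq_empty_or_nonempty
  · rw [swapFirstMismatch_of_empty (e ▸ h), swapFirstMismatch_of_empty h]
  · have hmin : (mismatches (swapFirstMismatch g)).min' (e ▸ h) = (mismatches g).min' h := by
      congr
    rw [swapFirstMismatch_of_nonempty (e ▸ h), hmin, swapFirstMismatch_of_nonempty h]
    ext
    simp

theorem sign_sort_swapFirstMismatch {g : Fin n → α} (h : (mismatches g).Nonempty) :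
    sign (sort (swapFirstMismatch g)) = -sign (sort g) := by
  have hp := min'_mem _ h
  rw [swapFirstMismatch_of_nonempty h,
    sign_sort_comp_swap (val_eq_blockStart_add_one hp) (mem_filter.1 hp).2]

theorem sum_sign_sort [Fintype α] :
    ∑ g : Fin n → α, (sign (sort g) : ℤ) = Fintype.card α ^ ((n + 1) / 2) := by
  have hunpaired {g : Fin n → α} (hg : g ∈ univ.filter (fun g : Fin n → α => ¬IsPaired g)) :
      (mismatches g).Nonempty := by
    rw [nonempty_iff_ne_empty, Ne, ← isPaired_iff_mismatches_eq_empty]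
    exact (mem_filter.1 hg).2
  have hcancel : ∑ g ∈ univ.filter (fun g : Fin n → α => ¬IsPaired g), (sign (sort g) : ℤ) = 0 := by
    refine sum_involution (fun g _ => swapFirstMismatch g) (fun g hg => ?_) (fun g hg hne => ?_)
      (fun g hg => ?_) (fun g _ => swapFirstMismatch_involutive (α := α) g)
    · rw [sign_sort_swapFirstMismatch (hunpaired hg), Units.val_neg, add_neg_cancel]
    · intro hfix
      have hflip := sign_sort_swapFirstMismatch (hunpaired hg)
      rw [hfix] at hflip
      exact units_ne_neg_self _ hflip
    · simp only [mem_filter, mem_univ, true_and, isPaired_iff_mismatches_eq_empty,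
        mismatches_swapFirstMismatch]
      exact (hunpaired hg).ne_empty
  rw [← sum_filter_add_sum_filter_not univ IsPaired, hcancel, add_zero,
    sum_congr rfl fun g hg => by rw [sign_sort_of_isPaired (mem_filter.1 hg).2], sum_const,
    card_isPaired]
  simp

theorem sum_sign_mul_card_sort_eq [Fintype α] :
    ∑ w : Perm (Fin n), (sign w : ℤ) * #{g : Fin n → α | sort g = w}
      = Fintype.card α ^ ((n + 1) / 2) := by
  rw [← sum_sign_sort, ← sum_fiberwise' univ Tuple.sort fun w => (sign w : ℤ)]
  simp [mul_comm]

end PairedFunctions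

theorem card_strictMono_fin (k M : ℕ) : #{c : Fin k → Fin M | StrictMono c} = M.choose k := by
  have e : {c : Fin k → Fin M // StrictMono c} ≃ (Fin k ↪o Fin M) :=
    { toFun := fun c => OrderEmbedding.ofStrictMono c.1 c.2
      invFun := fun f => ⟨f, f.strictMono⟩
      left_inv := fun _ => rfl
      right_inv := fun _ => rfl }
  rw [← Fintype.card_subtype, ← Nat.card_eq_fintype_card, Nat.card_congr
    (e.trans Set.powersetCard.ofFinEmbEquiv), Set.powersetCard.card, Nat.card_eq_fintype_card,
    Fintype.card_fin]

theorem Fin.val_le_val_of_strictMono {m M : ℕ} {c : Fin (m + 1) → Fin M} (hc : StrictMono c)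
    (j : Fin (m + 1)) : (j : ℕ) ≤ c j := by
  induction j using Fin.induction with
  | zero => simp
  | succ i ih =>
    have := Fin.lt_def.1 (hc (Fin.castSucc_lt_succ (i := i)))
    simp only [Fin.val_succ, Fin.val_castSucc] at ih ⊢
    omega

theorem card_strictMono_add {m K : ℕ} (s : Fin (m + 1) → ℕ) (hs_le : ∀ j, s j ≤ j)
    (hs_step : ∀ i : Fin m, s i.succ ≤ s i.castSucc + 1) :
    #{a : Fin (m + 1) → Fin K | StrictMono (fun j => (a j : ℕ) + s j)}
      = (K + s (Fin.last m)).choose (m + 1) := by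
  rw [← card_strictMono_fin]
  have hbound {a : Fin (m + 1) → Fin K} (ha : StrictMono (fun j => (a j : ℕ) + s j)) (j) :
      (a j : ℕ) + s j < K + s (Fin.last m) := by
    have h1 : (a j : ℕ) + s j ≤ a (Fin.last m) + s (Fin.last m) := ha.monotone (Fin.le_last j)
    have h2 := (a (Fin.last m)).isLt
    omega
  have hbound' {c : Fin (m + 1) → Fin (K + s (Fin.last m))} (hc : StrictMono c) (j) :
      (c j : ℕ) - s j < K := by
    have hmono : Monotone (fun j => (c j : ℕ) - s j) := by
      refine Fin.monotone_iff_le_succ.2 fun i => ?_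
      have h1 := Fin.lt_def.1 (hc (Fin.castSucc_lt_succ (i := i)))
      have h2 := hs_step i
      omega
    have h1 : (c j : ℕ) - s j ≤ c (Fin.last m) - s (Fin.last m) := hmono (Fin.le_last j)
    have h2 := (c (Fin.last m)).isLt
    have h3 := (hs_le (Fin.last m)).trans (Fin.val_le_val_of_strictMono hc (Fin.last m))
    omega
  refine card_bij' (fun a ha => fun j => ⟨a j + s j, hbound (mem_filter.1 ha).2 j⟩)
    (fun c hc => fun j => ⟨c j - s j, hbound' (mem_filter.1 hc).2 j⟩) ?_ ?_ ?_ ?_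
  · intro a ha
    simp only [mem_filter, mem_univ, true_and]
    exact fun i j hij => Fin.lt_def.2 ((mem_filter.1 ha).2 hij)
  · intro c hc
    simp only [mem_filter, mem_univ, true_and] at hc ⊢
    intro i j hij
    have hcij := Fin.lt_def.1 (hc hij)
    have hsi := (hs_le i).trans (Fin.val_le_val_of_strictMono hc i)
    have hsj := (hs_le j).trans (Fin.val_le_val_of_strictMono hc j)
    dsimp only
    omega
  · intro a ha
    ext j
    simp
  · intro c hc
    ext j
    have hsc := (hs_le j).trans (Fin.val_le_val_of_strictMono (mem_filter.1 hc).2 j)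
    dsimp only
    omega

theorem Nat.count_not_add_count (p : ℕ → Prop) [DecidablePred p] (n : ℕ) :
    Nat.count (fun i => ¬p i) n + Nat.count p n = n := by
  induction n with
  | zero => simp
  | succ n ih =>
    rw [Nat.count_succ, Nat.count_succ]
    split_ifs <;> omega

def IsDescent {n : ℕ} (w : Perm (Fin n)) (i : ℕ) : Prop :=
  ∃ h : i + 1 < n, w ⟨i + 1, h⟩ < w ⟨i, Nat.lt_of_succ_lt h⟩

theorem desA_eq_count {n : ℕ} (w : Perm (Fin n)) : desA w = Nat.count (IsDescent w) (n - 1) := by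
  rw [Nat.count_eq_card_filter_range, desA]
  congr

theorem desA_le {m : ℕ} (w : Perm (Fin (m + 1))) : desA w ≤ m := by
  rw [desA_eq_count]
  exact Nat.count_le _

theorem isDescent_iff {m : ℕ} (w : Perm (Fin (m + 1))) (i : Fin m) :
    IsDescent w i ↔ w i.succ < w i.castSucc := by
  simp [IsDescent, Fin.succ, Fin.castSucc, Fin.castAdd, Fin.castLE]

theorem sort_eq_iff_strictMono_add_count {m K : ℕ} (w : Perm (Fin (m + 1)))
    (g : Fin (m + 1) → Fin K) :
    sort g = w ↔ StrictMono (fun j => (g (w j) : ℕ) + Nat.count (fun i => ¬IsDescent w i) j) := by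
  rw [eq_comm, eq_sort_iff_strictMono_toLex, Fin.strictMono_iff_lt_succ,
    Fin.strictMono_iff_lt_succ]
  refine forall_congr' fun i => ?_
  have hne : w i.castSucc ≠ w i.succ := w.injective.ne Fin.castSucc_lt_succ.ne
  rw [Fin.val_succ, Fin.val_castSucc, Nat.count_succ, isDescent_iff, Prod.Lex.toLex_lt_toLex,
    Fin.lt_def, Fin.lt_def, Fin.ext_iff]
  dsimp only
  rcases hne.lt_or_gt with h | h
  · rw [if_pos h.not_gt]
    omega
  · rw [if_neg (not_not.2 h)]
    omega

theorem card_sort_eq {m K : ℕ} (w : Perm (Fin (m + 1))) :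
    #{g : Fin (m + 1) → Fin K | sort g = w} = (K + (m - desA w)).choose (m + 1) := by
  set s : Fin (m + 1) → ℕ := fun j => Nat.count (fun i => ¬IsDescent w i) j
  have hlast : s (Fin.last m) = m - desA w := by
    have := Nat.count_not_add_count (IsDescent w) m
    rw [desA_eq_count, Nat.add_sub_cancel]
    simp only [s, Fin.val_last]
    omega
  have hstep (i : Fin m) : s i.succ ≤ s i.castSucc + 1 := by
    simp only [s, Fin.val_succ, Fin.val_castSucc, Nat.count_succ]
    split_ifs <;> omega
  rw [← hlast, ← card_strictMono_add s (fun _ => Nat.count_le _) hstep]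
  refine card_nbij' (fun g => g ∘ ⇑w) (fun a => a ∘ ⇑w⁻¹) (fun g hg => ?_) (fun a ha => ?_)
    (fun g _ => ?_) (fun a _ => ?_)
  · simp only [coe_filter, mem_univ, true_and, Set.mem_ofPred_eq] at hg ⊢
    exact (sort_eq_iff_strictMono_add_count w g).1 hg
  · simp only [coe_filter, mem_univ, true_and, Set.mem_ofPred_eq] at ha ⊢
    exact (sort_eq_iff_strictMono_add_count w _).2 (by simpa using ha)
  · ext; simp
  · ext; simp

open PowerSeries

theorem coeff_X_pow_mul_mk_choose {R : Type*} [CommSemiring R] {d m : ℕ} (hd : d ≤ m) (K : ℕ) :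
    coeff K (X ^ (d + 1) * PowerSeries.mk fun j => ((m + 1 + j).choose (m + 1) : R) : R⟦X⟧)
      = (K + (m - d)).choose (m + 1) := by
  rw [coeff_X_pow_mul', coeff_mk]
  split_ifs with h
  · congr 2
    omega
  · rw [Nat.choose_eq_zero_of_lt (by omega), Nat.cast_zero]

theorem signed_eulerian_series (n : ℕ) (hn : 1 ≤ n) :
    ∑ w : Equiv.Perm (Fin n),
        (((Equiv.Perm.sign w : ℤ) : ℚ)) • (PowerSeries.X : PowerSeries ℚ) ^ (desA w + 1)
      = (1 - PowerSeries.X) ^ (n + 1) *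
          PowerSeries.mk (fun k => (k : ℚ) ^ ((n + 1) / 2)) := by
  obtain ⟨m, rfl⟩ : ∃ m, n = m + 1 := ⟨n - 1, by omega⟩
  set F := ∑ w : Perm (Fin (m + 1)), ((sign w : ℤ) : ℚ) • (X : ℚ⟦X⟧) ^ (desA w + 1)
  set G : ℚ⟦X⟧ := PowerSeries.mk fun j => ((m + 1 + j).choose (m + 1) : ℚ)
  have hFG : F * G = PowerSeries.mk fun k => (k : ℚ) ^ ((m + 1 + 1) / 2) := by
    ext K
    have hcount := sum_sign_mul_card_sort_eq (α := Fin K) (n := m + 1)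
    rw [Fintype.card_fin] at hcount
    simp only [F, G, sum_mul, map_sum, smul_mul_assoc, coeff_smul, coeff_mk, smul_eq_mul]
    rw [sum_congr rfl fun w _ => by rw [coeff_X_pow_mul_mk_choose (desA_le w), ← card_sort_eq]]
    exact_mod_cast hcount
  calc F = F * (G * (1 - X) ^ (m + 1 + 1)) := by rw [mk_add_choose_mul_one_sub_pow_eq_one, mul_one]
    _ = _ := by rw [← hFG]; ring
end

section
/- For all n ≥ 1 and 1 ≤ k ≤ n: if n ≡ 0 or 1 (mod 4), then the number of even permutations in S_n with k-1 descents equals the number of even permutations with n-k descents; if n ≡ 2 or 3 (mod 4), then the number of even permutations with k-1 descents equals the number of odd permutations with n-k descents. -/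
/-!
Composing with the reversal `i ↦ n - 1 - i` is an involution of `S_n` that turns the descents
of `w` into the ascents of `w`, so it sends `des w = k - 1` to `des = n - k`, and it multiplies
the sign by `sign rev = (-1) ^ ⌊n / 2⌋`, which is `1` exactly when `n ≡ 0, 1 (mod 4)`.
-/

open scoped Classical

/-- Number of inversions of a permutation. -/
noncomputable def invA {n : ℕ} (w : Equiv.Perm (Fin n)) : ℕ :=
  (Finset.univ.filter (fun p : Fin n × Fin n => p.1 < p.2 ∧ w p.2 < w p.1)).card

theorem neg_one_pow_add_one_div_two {M : Type*} [Monoid M] [HasDistribNeg M] (n : ℕ) :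
    (-1 : M) ^ ((n + 1) / 2) = (-1) ^ (n / 2) * (-1) ^ n := by
  rcases Nat.even_or_odd' n with ⟨m, rfl | rfl⟩
  · rw [show (2 * m + 1) / 2 = m by omega, show 2 * m / 2 = m by omega, pow_mul]
    simp
  · rw [show (2 * m + 1 + 1) / 2 = m + 1 by omega, show (2 * m + 1) / 2 = m by omega,
      pow_succ, pow_succ, pow_mul]
    simp

theorem Fin.revPerm_succ_eq_decomposeFin_symm_mul_finRotate (n : ℕ) :
    (Fin.revPerm : Equiv.Perm (Fin (n + 1))) =
      Equiv.Perm.decomposeFin.symm (0, Fin.revPerm) * finRotate (n + 1) := by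
  ext i
  induction i using Fin.lastCases <;> simp [Fin.rev_castSucc]

theorem Fin.sign_revPerm (n : ℕ) :
    Equiv.Perm.sign (Fin.revPerm : Equiv.Perm (Fin n)) = (-1) ^ (n / 2) := by
  induction n with
  | zero => rfl
  | succ n ih =>
    rw [Fin.revPerm_succ_eq_decomposeFin_symm_mul_finRotate, map_mul,
      Equiv.Perm.decomposeFin.symm_sign, ih, sign_finRotate,
      neg_one_pow_add_one_div_two]
    simp

def IsDescentAt {n : ℕ} (w : Equiv.Perm (Fin n)) (i : ℕ) : Prop :=
  ∃ h : i + 1 < n, w ⟨i + 1, h⟩ < w ⟨i, Nat.lt_of_succ_lt h⟩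

theorem desA_eq_sum_ite (n : ℕ) (w : Equiv.Perm (Fin n)) :
    desA w = ∑ i ∈ Finset.range (n - 1), if IsDescentAt w i then 1 else 0 := by
  rw [desA, Finset.card_filter]
  exact Finset.sum_congr rfl fun i _ => by unfold IsDescentAt; congr

theorem mul_revPerm_apply_mk {n : ℕ} (w : Equiv.Perm (Fin n)) {i j : ℕ} (hj : j < n)
    (hij : i + j + 1 = n) :
    (w * Fin.revPerm : Equiv.Perm (Fin n)) ⟨j, hj⟩ = w ⟨i, by omega⟩ := by
  simp only [Equiv.Perm.mul_apply, Fin.revPerm_apply]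
  congr 1
  ext
  simp only [Fin.val_rev]
  omega

theorem isDescentAt_mul_revPerm_iff {n : ℕ} (w : Equiv.Perm (Fin n)) {i : ℕ} (hi : i + 1 < n) :
    IsDescentAt (w * Fin.revPerm) (n - 1 - 1 - i) ↔ ¬ IsDescentAt w i := by
  have hne : w ⟨i, by omega⟩ ≠ w ⟨i + 1, hi⟩ := by simp
  simp only [IsDescentAt, hi, exists_true_left, show n - 1 - 1 - i + 1 < n by omega,
    mul_revPerm_apply_mk w _ (show i + (n - 1 - 1 - i + 1) + 1 = n by omega),
    mul_revPerm_apply_mk w _ (show i + 1 + (n - 1 - 1 - i) + 1 = n by omega), not_lt]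
  exact ⟨le_of_lt, fun h => lt_of_le_of_ne h hne⟩

theorem desA_mul_revPerm_add_desA (n : ℕ) (w : Equiv.Perm (Fin n)) :
    desA (w * Fin.revPerm) + desA w = n - 1 := by
  rw [desA_eq_sum_ite, desA_eq_sum_ite, ← Finset.sum_range_reflect, ← Finset.sum_add_distrib]
  calc _ = ∑ _i ∈ Finset.range (n - 1), 1 := by
        refine Finset.sum_congr rfl fun i hi => ?_
        rw [isDescentAt_mul_revPerm_iff w (by simp at hi; omega)]
        split_ifs <;> rfl
    _ = n - 1 := by simp

theorem card_filter_sign_desA_eq (n j : ℕ) (hj : j ≤ n - 1) (s : ℤˣ) :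
    (Finset.univ.filter (fun w : Equiv.Perm (Fin n) =>
        Equiv.Perm.sign w = s ∧ desA w = j)).card
      = (Finset.univ.filter (fun w : Equiv.Perm (Fin n) =>
        Equiv.Perm.sign w = s * (-1) ^ (n / 2) ∧ desA w = n - 1 - j)).card := by
  have sign_mul_rev (w : Equiv.Perm (Fin n)) :
      Equiv.Perm.sign (w * Fin.revPerm) = Equiv.Perm.sign w * (-1) ^ (n / 2) := by
    rw [map_mul, Fin.sign_revPerm]
  have rev_rev (w : Equiv.Perm (Fin n)) : w * Fin.revPerm * Fin.revPerm = w := by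
    ext; simp
  refine Finset.card_nbij' (· * Fin.revPerm) (· * Fin.revPerm) ?_ ?_
    (fun w _ => rev_rev w) (fun w _ => rev_rev w)
  · intro w hw
    simp only [Finset.coe_filter, Finset.mem_univ, true_and, Set.mem_ofPred_eq] at hw ⊢
    have := desA_mul_revPerm_add_desA n w
    exact ⟨by rw [sign_mul_rev, hw.1], by omega⟩
  · intro w hw
    simp only [Finset.coe_filter, Finset.mem_univ, true_and, Set.mem_ofPred_eq] at hw ⊢
    have := desA_mul_revPerm_add_desA n w
    exact ⟨by rw [sign_mul_rev, hw.1, mul_assoc, Int.units_mul_self, mul_one], by omega⟩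

theorem pm_eulerian_symmetry_general (n k : ℕ) (hk1 : 1 ≤ k) (hkn : k ≤ n) :
    ((n % 4 = 0 ∨ n % 4 = 1) →
      (Finset.univ.filter (fun w : Equiv.Perm (Fin n) =>
          Equiv.Perm.sign w = 1 ∧ desA w = k - 1)).card
        = (Finset.univ.filter (fun w : Equiv.Perm (Fin n) =>
          Equiv.Perm.sign w = 1 ∧ desA w = n - k)).card) ∧
    ((n % 4 = 2 ∨ n % 4 = 3) →
      (Finset.univ.filter (fun w : Equiv.Perm (Fin n) =>
          Equiv.Perm.sign w = 1 ∧ desA w = k - 1)).card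
        = (Finset.univ.filter (fun w : Equiv.Perm (Fin n) =>
          Equiv.Perm.sign w = -1 ∧ desA w = n - k)).card) := by
  have key := card_filter_sign_desA_eq n (k - 1) (by omega) 1
  rw [show n - 1 - (k - 1) = n - k by omega, one_mul] at key
  refine ⟨fun hmod => ?_, fun hmod => ?_⟩
  · rwa [(Nat.even_iff.mpr (by omega : n / 2 % 2 = 0)).neg_one_pow] at key
  · rwa [(Nat.odd_iff.mpr (by omega : n / 2 % 2 = 1)).neg_one_pow] at key

theorem pm_eulerian_symmetry (n k : ℕ) (hn : 1 ≤ n) (hk1 : 1 ≤ k) (hkn : k ≤ n) :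
    ((n % 4 = 0 ∨ n % 4 = 1) →
      (Finset.univ.filter (fun w : Equiv.Perm (Fin n) =>
          Equiv.Perm.sign w = 1 ∧ desA w = k - 1)).card
        = (Finset.univ.filter (fun w : Equiv.Perm (Fin n) =>
          Equiv.Perm.sign w = 1 ∧ desA w = n - k)).card) ∧
    ((n % 4 = 2 ∨ n % 4 = 3) →
      (Finset.univ.filter (fun w : Equiv.Perm (Fin n) =>
          Equiv.Perm.sign w = 1 ∧ desA w = k - 1)).card
        = (Finset.univ.filter (fun w : Equiv.Perm (Fin n) =>
          Equiv.Perm.sign w = -1 ∧ desA w = n - k)).card) :=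
  pm_eulerian_symmetry_general n k hk1 hkn
end

section
/- For any integer r ≥ 1 and any n with ⌊n/2⌋ > r, the r-th moment of the number of descents of a uniformly random even permutation in S_n equals the r-th moment of the number of descents of a uniformly random permutation in S_n. -/
open scoped Classical
open Finset Equiv

noncomputable def DSet {n : ℕ} (w : Equiv.Perm (Fin n)) : Finset ℕ :=
  (Finset.range (n - 1)).filter (fun i =>
    ∃ h : i + 1 < n, w ⟨i + 1, h⟩ < w ⟨i, Nat.lt_of_succ_lt h⟩)

lemma sign_sum_zero {n : ℕ} (p q : Fin n) (hpq : p ≠ q) (s : Finset (Equiv.Perm (Fin n)))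
    (hs : ∀ w ∈ s, w * Equiv.swap p q ∈ s) :
    ∑ w ∈ s, ((Equiv.Perm.sign w : ℤ) : ℚ) = 0 := by
  refine Finset.sum_involution (fun w _ => w * Equiv.swap p q) ?_ ?_ hs ?_
  · intro w _
    rw [Equiv.Perm.sign_mul, Equiv.Perm.sign_swap hpq]
    push_cast; ring
  · intro w _ _
    simp [Equiv.mul_swap_eq_iff, hpq]
  · intro w _
    simp [mul_assoc, Equiv.swap_mul_self]

lemma key (n r : ℕ) (hn : 2 * r + 2 ≤ n) :
    ∑ w : Equiv.Perm (Fin n), ((Equiv.Perm.sign w : ℤ) : ℚ) * (desA w : ℚ) ^ r = 0 := by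
  have hstep : ∀ w : Equiv.Perm (Fin n),
      ((Equiv.Perm.sign w : ℤ) : ℚ) * (desA w : ℚ) ^ r
      = ∑ f ∈ Fintype.piFinset (fun _ : Fin r => DSet w), ((Equiv.Perm.sign w : ℤ) : ℚ) := by
    intro w
    rw [Finset.sum_const, Fintype.card_piFinset]
    simp [desA, DSet, Finset.prod_const, nsmul_eq_mul, mul_comm]
  have hfil : ∀ w : Equiv.Perm (Fin n),
      Fintype.piFinset (fun _ : Fin r => DSet w)
      = (Fintype.piFinset fun _ : Fin r => Finset.range (n - 1)).filter
          (fun f => ∀ j, f j ∈ DSet w) := by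
    intro w
    ext f
    simp only [Fintype.mem_piFinset, Finset.mem_filter]
    constructor
    · intro hf
      exact ⟨fun j => (Finset.mem_filter.mp (hf j)).1, hf⟩
    · exact fun h => h.2
  calc ∑ w : Equiv.Perm (Fin n), ((Equiv.Perm.sign w : ℤ) : ℚ) * (desA w : ℚ) ^ r
      = ∑ w : Equiv.Perm (Fin n), ∑ f ∈ (Fintype.piFinset fun _ : Fin r => Finset.range (n - 1)),
          (if (∀ j, f j ∈ DSet w) then ((Equiv.Perm.sign w : ℤ) : ℚ) else 0) := by
        refine Finset.sum_congr rfl fun w _ => ?_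
        rw [hstep w, hfil w, Finset.sum_filter]
    _ = ∑ f ∈ (Fintype.piFinset fun _ : Fin r => Finset.range (n - 1)),
          ∑ w : Equiv.Perm (Fin n),
          (if (∀ j, f j ∈ DSet w) then ((Equiv.Perm.sign w : ℤ) : ℚ) else 0) :=
        Finset.sum_comm
    _ = 0 := by
        refine Finset.sum_eq_zero fun f hf => ?_
        rw [← Finset.sum_filter]
        -- find two free positions
        set B : Finset ℕ := (Finset.image f Finset.univ) ∪
          (Finset.image (fun j => f j + 1) Finset.univ) with hBdef
        have hBcard : B.card ≤ 2 * r := by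
          calc B.card ≤ (Finset.image f Finset.univ).card
                + (Finset.image (fun j => f j + 1) Finset.univ).card := Finset.card_union_le _ _
            _ ≤ r + r := by
                gcongr <;> simpa using Finset.card_image_le.trans (by simp)
            _ = 2 * r := by ring
        set Free : Finset (Fin n) := Finset.univ.filter (fun x => (x : ℕ) ∉ B) with hFdef
        have hFree : 1 < Free.card := by
          have h1 : (Finset.univ.filter (fun x : Fin n => (x : ℕ) ∈ B)).card ≤ B.card :=
            Finset.card_le_card_of_injOn (fun x : Fin n => (x : ℕ))
              (fun x hx => (Finset.mem_filter.mp hx).2)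
              (fun a _ b _ hab => Fin.val_injective hab)
          have h2 := Finset.card_filter_add_card_filter_not
            (s := (Finset.univ : Finset (Fin n))) (p := fun x : Fin n => (x : ℕ) ∈ B)
          have e : Free = Finset.univ.filter (fun a : Fin n => ¬ ((a : ℕ) ∈ B)) := rfl
          rw [Finset.card_univ, Fintype.card_fin] at h2
          rw [e]
          omega
        obtain ⟨p, hp, q, hq, hpq⟩ := Finset.one_lt_card.mp hFree
        have hpB : (p : ℕ) ∉ B := (Finset.mem_filter.mp hp).2
        have hqB : (q : ℕ) ∉ B := (Finset.mem_filter.mp hq).2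
        have hfix : ∀ x : Fin n, (x : ℕ) ∈ B → Equiv.swap p q x = x := by
          intro x hx
          apply Equiv.swap_apply_of_ne_of_ne
          · rintro rfl; exact hpB hx
          · rintro rfl; exact hqB hx
        apply sign_sum_zero p q hpq
        intro w hw
        simp only [Finset.mem_filter, Finset.mem_univ, true_and] at hw ⊢
        intro j
        have h1 : f j ∈ B := Finset.mem_union_left _ (Finset.mem_image_of_mem f (Finset.mem_univ j))
        have h2 : f j + 1 ∈ B := Finset.mem_union_right _
          (Finset.mem_image_of_mem (fun j => f j + 1) (Finset.mem_univ j))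
        have := hw j
        simp only [DSet, Finset.mem_filter] at this ⊢
        refine ⟨this.1, ?_⟩
        obtain ⟨hlt, hdes⟩ := this.2
        refine ⟨hlt, ?_⟩
        have e1 : Equiv.swap p q ⟨f j + 1, hlt⟩ = ⟨f j + 1, hlt⟩ := hfix _ h2
        have e2 : Equiv.swap p q ⟨f j, Nat.lt_of_succ_lt hlt⟩ = ⟨f j, Nat.lt_of_succ_lt hlt⟩ :=
          hfix _ h1
        rw [Equiv.Perm.mul_apply, Equiv.Perm.mul_apply, e1, e2]
        exact hdes

theorem pm_eulerian_moments (n r : ℕ) (hr : 1 ≤ r) (h : r < n / 2) :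
    (∑ w ∈ Finset.univ.filter (fun w : Equiv.Perm (Fin n) => Equiv.Perm.sign w = 1),
        ((desA w : ℚ)) ^ r) /
      ((Finset.univ.filter (fun w : Equiv.Perm (Fin n) => Equiv.Perm.sign w = 1)).card : ℚ)
    = (∑ w : Equiv.Perm (Fin n), ((desA w : ℚ)) ^ r) / (Nat.factorial n : ℚ) := by
  have hn : 2 * r + 2 ≤ n := by omega
  set S1 := Finset.univ.filter (fun w : Equiv.Perm (Fin n) => Equiv.Perm.sign w = 1) with hS1
  set S2 := Finset.univ.filter (fun w : Equiv.Perm (Fin n) => ¬ Equiv.Perm.sign w = 1) with hS2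
  have hsign : ∀ w : Equiv.Perm (Fin n), w ∈ S2 → Equiv.Perm.sign w = -1 := by
    intro w hw
    rcases Int.units_eq_one_or (Equiv.Perm.sign w) with h1 | h1
    · exact absurd h1 (Finset.mem_filter.mp hw).2
    · exact h1
  have split : ∀ F : Equiv.Perm (Fin n) → ℚ,
      (∑ w : Equiv.Perm (Fin n), ((Equiv.Perm.sign w : ℤ) : ℚ) * F w)
      = ∑ w ∈ S1, F w - ∑ w ∈ S2, F w := by
    intro F
    rw [← Finset.sum_filter_add_sum_filter_not Finset.univ
      (fun w : Equiv.Perm (Fin n) => Equiv.Perm.sign w = 1)]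
    have A : ∑ w ∈ S1, ((Equiv.Perm.sign w : ℤ) : ℚ) * F w = ∑ w ∈ S1, F w :=
      Finset.sum_congr rfl fun w hw => by
        rw [(Finset.mem_filter.mp hw).2]; simp
    have B : ∑ w ∈ S2, ((Equiv.Perm.sign w : ℤ) : ℚ) * F w = -∑ w ∈ S2, F w := by
      rw [← Finset.sum_neg_distrib]
      exact Finset.sum_congr rfl fun w hw => by rw [hsign w hw]; simp
    rw [← hS1, ← hS2, A, B]
    ring
  have hp01 : (⟨0, by omega⟩ : Fin n) ≠ ⟨1, by omega⟩ := by simp [Fin.ext_iff]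
  have hcard0 : (S1.card : ℚ) = (S2.card : ℚ) := by
    have h0 := sign_sum_zero _ _ hp01 Finset.univ (fun w _ => Finset.mem_univ _)
    have := split (fun _ => (1 : ℚ))
    simp only [mul_one] at this
    rw [h0] at this
    simp only [Finset.sum_const, nsmul_eq_mul, mul_one] at this
    linarith
  have hcardsum : (S1.card : ℚ) + (S2.card : ℚ) = (Nat.factorial n : ℚ) := by
    have h2 := Finset.card_filter_add_card_filter_not
      (s := (Finset.univ : Finset (Equiv.Perm (Fin n))))
      (p := fun w : Equiv.Perm (Fin n) => Equiv.Perm.sign w = 1)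
    rw [Finset.card_univ] at h2
    have h3 : Fintype.card (Equiv.Perm (Fin n)) = Nat.factorial n := by
      simp [Fintype.card_perm, Fintype.card_fin]
    rw [h3] at h2
    exact_mod_cast h2
  have hEO : ∑ w ∈ S1, ((desA w : ℚ)) ^ r = ∑ w ∈ S2, ((desA w : ℚ)) ^ r := by
    have hk := key n r hn
    rw [split (fun w => ((desA w : ℚ)) ^ r)] at hk
    linarith
  have htot : ∑ w : Equiv.Perm (Fin n), ((desA w : ℚ)) ^ r
      = 2 * ∑ w ∈ S1, ((desA w : ℚ)) ^ r := by
    rw [← Finset.sum_filter_add_sum_filter_not Finset.univ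
      (fun w : Equiv.Perm (Fin n) => Equiv.Perm.sign w = 1), ← hS1, ← hS2, ← hEO]
    ring
  have hfac : (Nat.factorial n : ℚ) = 2 * (S1.card : ℚ) := by linarith
  have hc0 : (S1.card : ℚ) ≠ 0 := by
    intro hc
    rw [hc, mul_zero] at hfac
    have h1 : Nat.factorial n = 0 := by exact_mod_cast hfac
    exact (Nat.factorial_pos n).ne' h1
  rw [htot, hfac]
  field_simp
end

section
/- For any n ≥ 2 and any k ≥ 0, the number of even permutations of {1,...,n} with exactly k valleys equals the number of odd permutations of {1,...,n} with exactly k valleys. -/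
open scoped Classical

/-- Number of valleys of a permutation: indices `i` (0-indexed, `1 ≤ i ≤ n-2`)
with `w(i-1) > w(i) < w(i+1)`. -/
noncomputable def valA {n : ℕ} (w : Equiv.Perm (Fin n)) : ℕ :=
  ((Finset.range n).filter (fun i =>
    ∃ h : i + 1 < n ∧ 1 ≤ i,
      w ⟨i, by omega⟩ < w ⟨i - 1, by omega⟩ ∧ w ⟨i, by omega⟩ < w ⟨i + 1, h.1⟩)).card

lemma key_swap {n : ℕ} (hn : 2 ≤ n) (u v₁ v₂ : Fin n)
    (h1 : u ≠ v₁) (h2 : u ≠ v₂) (h3 : v₁ ≠ v₂) :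
    (Equiv.swap (⟨n-1, by omega⟩ : Fin n) ⟨n-2, by omega⟩ u <
        Equiv.swap (⟨n-1, by omega⟩ : Fin n) ⟨n-2, by omega⟩ v₁ ∧
      Equiv.swap (⟨n-1, by omega⟩ : Fin n) ⟨n-2, by omega⟩ u <
        Equiv.swap (⟨n-1, by omega⟩ : Fin n) ⟨n-2, by omega⟩ v₂)
    ↔ (u < v₁ ∧ u < v₂) := by
  have hu := u.isLt
  have hv1 := v₁.isLt
  have hv2 := v₂.isLt
  simp only [Equiv.swap_apply_def, Fin.lt_def, ne_eq, Fin.ext_iff] at *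
  split_ifs <;> simp_all <;> omega

lemma valA_swap {n : ℕ} (hn : 2 ≤ n) (w : Equiv.Perm (Fin n)) :
    valA (Equiv.swap (⟨n-1, by omega⟩ : Fin n) ⟨n-2, by omega⟩ * w) = valA w := by
  unfold valA
  congr 1
  apply Finset.filter_congr
  intro i _
  simp only [Equiv.Perm.mul_apply]
  apply exists_congr
  rintro ⟨h1, h2⟩
  apply key_swap hn
  · intro h
    have := w.injective h
    simp only [Fin.ext_iff] at this
    omega
  · intro h
    have := w.injective h
    simp only [Fin.ext_iff] at this
    omega
  · intro h
    have := w.injective h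
    simp only [Fin.ext_iff] at this
    omega

theorem valleys_even_odd (n k : ℕ) (hn : 2 ≤ n) :
    (Finset.univ.filter (fun w : Equiv.Perm (Fin n) =>
        Equiv.Perm.sign w = 1 ∧ valA w = k)).card
      = (Finset.univ.filter (fun w : Equiv.Perm (Fin n) =>
        Equiv.Perm.sign w = -1 ∧ valA w = k)).card := by
  set a : Fin n := ⟨n-1, by omega⟩
  set b : Fin n := ⟨n-2, by omega⟩
  have hab : a ≠ b := by simp [a, b, Fin.ext_iff]; omega
  have hsign : Equiv.Perm.sign (Equiv.swap a b) = -1 := Equiv.Perm.sign_swap hab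
  apply Finset.card_bij' (fun w _ => Equiv.swap a b * w) (fun w _ => Equiv.swap a b * w)
  · intro w hw
    simp only [Finset.mem_filter, Finset.mem_univ, true_and] at hw ⊢
    rw [map_mul, hsign, hw.1, valA_swap hn]
    exact ⟨by simp, hw.2⟩
  · intro w hw
    simp only [Finset.mem_filter, Finset.mem_univ, true_and] at hw ⊢
    rw [map_mul, hsign, hw.1, valA_swap hn]
    exact ⟨by simp, hw.2⟩
  · intro w _
    rw [← mul_assoc, Equiv.swap_mul_self, one_mul]
  · intro w _
    rw [← mul_assoc, Equiv.swap_mul_self, one_mul]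
end

section
/- For all n ≥ 1, ∑_{w ∈ B_n} sgn_B(w) t^{des_B(w)} = (1-t)^{n+1} ∑_{k ≥ 0} t^k = (1-t)^n as polynomials (equivalently, ∑_{w ∈ B_n} sgn_B(w) t^{des_B(w)} = (1-t)^n). -/
open scoped Classical

/-- An element of the hyperoctahedral group `B_n`, encoded as an underlying
permutation `u ∈ S_n` together with the set of negated positions (`true` = negated). -/
abbrev BPerm (n : ℕ) := Equiv.Perm (Fin n) × (Fin n → Bool)

/-- The one-line value `w(i)` (as an integer, positions and values `1,…,n`)
of the signed permutation, with the convention `w(0) = 0`. -/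
noncomputable def bval {n : ℕ} (p : BPerm n) (i : ℕ) : ℤ :=
  if h : 1 ≤ i ∧ i ≤ n then
    (if p.2 ⟨i - 1, by omega⟩ then -(((p.1 ⟨i - 1, by omega⟩ : Fin n) : ℕ) + 1 : ℤ)
      else (((p.1 ⟨i - 1, by omega⟩ : Fin n) : ℕ) + 1 : ℤ))
  else 0

/-- The number of type B descents: `0 ≤ i ≤ n-1` with `w(i) > w(i+1)`, where `w(0)=0`. -/
noncomputable def desB {n : ℕ} (p : BPerm n) : ℕ :=
  ((Finset.range n).filter (fun i => bval p (i + 1) < bval p i)).card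

/-- The sign character of `B_n`: `sgn_B(u^J) = (-1)^{|J|} sgn(u)`. -/
noncomputable def sgnB {n : ℕ} (p : BPerm n) : ℤ :=
  (Equiv.Perm.sign p.1 : ℤ) * (-1) ^ ((Finset.univ.filter (fun i => p.2 i = true)).card)

/-!
Split `B_{n+1}` according to the position of the entry `±(n+1)`. If it is not in the last
position, changing its sign reverses `sgn_B` and keeps `des_B`: its two neighbours have smaller
absolute value, so exactly one of the two comparisons around it is a descent, whatever its sign.
If it is in the last position, removing it gives an element of `B_n`; the entry `+(n+1)` adds no
descent and keeps the sign, while `-(n+1)` adds one descent and flips the sign. Hence the signed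
descent polynomial gets multiplied by `1 - t` from `B_n` to `B_{n+1}`.
-/

open Finset Polynomial Equiv

section

variable {n : ℕ}

lemma bval_zero (p : BPerm n) : bval p 0 = 0 := rfl

lemma bval_of_lt {k : ℕ} (p : BPerm n) (hk : n < k) : bval p k = 0 :=
  dif_neg (by omega)

lemma bval_succ (p : BPerm n) (i : Fin n) :
    bval p (i + 1) = if p.2 i then -((p.1 i : ℤ) + 1) else (p.1 i : ℤ) + 1 := by
  rw [bval, dif_pos (by omega)]
  simp

lemma abs_bval_succ (p : BPerm n) (i : Fin n) : |bval p (i + 1)| = (p.1 i : ℤ) + 1 := by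
  rw [bval_succ]
  have hpos : (0 : ℤ) ≤ (p.1 i : ℤ) + 1 := by positivity
  split_ifs <;> simp only [abs_neg, abs_of_nonneg hpos]

lemma bval_cases (k : ℕ) : (∀ p : BPerm n, bval p k = 0) ∨ ∃ i : Fin n, k = i + 1 := by
  rcases Nat.eq_zero_or_pos k with rfl | hk
  · exact .inl bval_zero
  by_cases hkn : n < k
  · exact .inl fun p => bval_of_lt p hkn
  · exact .inr ⟨⟨k - 1, by omega⟩, by simp only; omega⟩

lemma abs_bval_le (p : BPerm n) (k : ℕ) : |bval p k| ≤ n := by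
  rcases bval_cases (n := n) k with h | ⟨i, rfl⟩
  · simp [h]
  · rw [abs_bval_succ]; have := (p.1 i).isLt; omega

lemma abs_bval_le_of_ne_max (p : BPerm (n + 1)) {j : Fin (n + 1)} (hj : p.1 j = Fin.last n)
    {k : ℕ} (hk : k ≠ j + 1) : |bval p k| ≤ n := by
  rcases bval_cases (n := n + 1) k with h | ⟨i, rfl⟩
  · simp [h]
  · have hi : p.1 i ≠ Fin.last n := hj ▸ p.1.injective.ne (by rintro rfl; exact hk rfl)
    rw [abs_bval_succ]
    have := Fin.val_lt_last hi
    omega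

lemma desB_eq_sum (p : BPerm n) :
    desB p = ∑ k ∈ range n, if bval p (k + 1) < bval p k then 1 else 0 :=
  card_filter _ _

lemma desB_eq_one_add_of_max (p : BPerm (n + 1)) {j : Fin (n + 1)} (hj : p.1 j = Fin.last n)
    (hjn : (j : ℕ) < n) :
    desB p = 1 + ∑ k ∈ ((range (n + 1)).erase j).erase (j + 1),
      if bval p (k + 1) < bval p k then 1 else 0 := by
  have hmem : (j : ℕ) ∈ range (n + 1) := mem_range.2 j.isLt
  have hmem' : (j : ℕ) + 1 ∈ (range (n + 1)).erase j :=
    mem_erase.2 ⟨by omega, mem_range.2 (by omega)⟩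
  rw [desB_eq_sum, ← add_sum_erase _ _ hmem, ← add_sum_erase _ _ hmem', ← add_assoc]
  congr 1
  have hmax := abs_bval_succ p j
  have hleft := abs_bval_le_of_ne_max p hj (k := j) (by omega)
  have hright := abs_bval_le_of_ne_max p hj (k := j + 1 + 1) (by omega)
  simp only [hj, Fin.val_last] at hmax
  rw [abs_le] at hleft hright
  rcases abs_cases (bval p (j + 1)) with ⟨h, -⟩ | ⟨h, -⟩ <;> split_ifs <;> omega

def flipSign (p : BPerm n) (i : Fin n) : BPerm n :=
  (p.1, Function.update p.2 i (!p.2 i))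

lemma flipSign_flipSign (p : BPerm n) (i : Fin n) : flipSign (flipSign p i) i = p := by
  simp [flipSign]

lemma flipSign_ne (p : BPerm n) (i : Fin n) : flipSign p i ≠ p := fun h => by
  simpa [flipSign] using congr_fun (congr_arg Prod.snd h) i

lemma bval_flipSign_of_ne (p : BPerm n) (i : Fin n) {k : ℕ} (hk : k ≠ i + 1) :
    bval (flipSign p i) k = bval p k := by
  rcases bval_cases (n := n) k with h | ⟨l, rfl⟩
  · rw [h, h]
  · have hl : l ≠ i := by rintro rfl; exact hk rfl
    simp [bval_succ, flipSign, hl]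

lemma sgnB_eq_sign_mul_prod (p : BPerm n) :
    sgnB p = Perm.sign p.1 * ∏ i, if p.2 i then -1 else 1 := by
  simp [sgnB, prod_ite]

lemma sgnB_flipSign (p : BPerm n) (i : Fin n) : sgnB (flipSign p i) = -sgnB p := by
  simp only [sgnB_eq_sign_mul_prod, flipSign]
  have hrest : ∏ l ∈ univ.erase i, (if Function.update p.2 i (!p.2 i) l then -1 else 1)
      = ∏ l ∈ univ.erase i, (if p.2 l then (-1 : ℤ) else 1) :=
    prod_congr rfl fun l hl => by rw [Function.update_of_ne (ne_of_mem_erase hl)]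
  rw [← mul_prod_erase _ _ (mem_univ i), ← mul_prod_erase univ _ (mem_univ i), hrest]
  cases p.2 i <;> simp

lemma desB_flipSign_of_max (p : BPerm (n + 1)) {j : Fin (n + 1)} (hj : p.1 j = Fin.last n)
    (hjn : (j : ℕ) < n) : desB (flipSign p j) = desB p := by
  rw [desB_eq_one_add_of_max p hj hjn, desB_eq_one_add_of_max (flipSign p j) hj hjn]
  refine congr_arg (1 + ·) (sum_congr rfl fun k hk => ?_)
  obtain ⟨hk₁, hk₂, -⟩ : k ≠ j + 1 ∧ k ≠ j ∧ _ := by simpa only [mem_erase] using hk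
  rw [bval_flipSign_of_ne p j hk₁, bval_flipSign_of_ne p j (by omega)]

lemma sum_filter_max_ne_last :
    ∑ p ∈ univ.filter (fun p : BPerm (n + 1) => p.1 (Fin.last n) ≠ Fin.last n),
      sgnB p • (X : ℤ[X]) ^ desB p = 0 := by
  refine sum_involution (fun p _ => flipSign p (p.1.symm (Fin.last n))) ?_ ?_ ?_ ?_
  · intro p hp
    have hj : p.1 (p.1.symm (Fin.last n)) = Fin.last n := p.1.apply_symm_apply _
    have hjn : ((p.1.symm (Fin.last n) : Fin (n + 1)) : ℕ) < n := by
      refine Fin.val_lt_last fun h => (mem_filter.1 hp).2 ?_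
      rwa [h] at hj
    rw [sgnB_flipSign, desB_flipSign_of_max p hj hjn, neg_smul, add_neg_cancel]
  · exact fun p _ _ => flipSign_ne p _
  · exact fun p hp => mem_filter.2 ⟨mem_univ _, (mem_filter.1 hp).2⟩
  · exact fun p _ => flipSign_flipSign p _

variable (n) in
def permEquivFixingLast :
    Perm (Fin n) ≃ {σ : Perm (Fin (n + 1)) // σ (Fin.last n) = Fin.last n} :=
  ((finSuccAboveEquiv (Fin.last n)).permCongr.trans (Perm.subtypeEquivSubtypePerm _)).trans
    (subtypeEquivRight fun σ => by simp)

lemma permEquivFixingLast_apply_castSucc (u : Perm (Fin n)) (i : Fin n) :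
    (permEquivFixingLast n u).1 i.castSucc = (u i).castSucc := by
  have h := Perm.ofSubtype_apply_coe ((finSuccAboveEquiv (Fin.last n)).permCongr u)
    (finSuccAboveEquiv (Fin.last n) i)
  rw [permCongr_apply, symm_apply_apply] at h
  simp only [finSuccAboveEquiv_apply, Fin.succAbove_last] at h
  simpa [permEquivFixingLast] using h

lemma sign_permEquivFixingLast (u : Perm (Fin n)) :
    Perm.sign (permEquivFixingLast n u).1 = Perm.sign u := by
  simp [permEquivFixingLast, Perm.sign_ofSubtype, Perm.sign_permCongr]

variable (n) in
/-- Appending the entry `±(n+1)` (negated iff the flag is `true`) at the last position. -/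
def bpermSnocEquiv : BPerm n × Bool ≃ {p : BPerm (n + 1) // p.1 (Fin.last n) = Fin.last n} where
  toFun qs := ⟨((permEquivFixingLast n qs.1.1).1, Fin.snoc qs.1.2 qs.2),
    (permEquivFixingLast n qs.1.1).2⟩
  invFun p := (((permEquivFixingLast n).symm ⟨p.1.1, p.2⟩, Fin.init p.1.2), p.1.2 (Fin.last n))
  left_inv := by rintro ⟨⟨u, ε⟩, s⟩; simp
  right_inv := by rintro ⟨⟨σ, ε⟩, h⟩; simp [Fin.snoc_init_self]

lemma bpermSnocEquiv_apply_coe (q : BPerm n) (s : Bool) :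
    (bpermSnocEquiv n (q, s)).1 = ((permEquivFixingLast n q.1).1, Fin.snoc q.2 s) :=
  rfl

lemma bval_bpermSnocEquiv_of_le (q : BPerm n) (s : Bool) {k : ℕ} (hk : k ≤ n) :
    bval (bpermSnocEquiv n (q, s)).1 k = bval q k := by
  rcases k with _ | k
  · rfl
  have h := bval_succ (bpermSnocEquiv n (q, s)).1 (Fin.castSucc ⟨k, hk⟩)
  simp only [bpermSnocEquiv_apply_coe, Fin.snoc_castSucc, permEquivFixingLast_apply_castSucc,
    Fin.val_castSucc] at h
  rw [bpermSnocEquiv_apply_coe, h, bval_succ q ⟨k, hk⟩]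

lemma bval_bpermSnocEquiv_last (q : BPerm n) (s : Bool) :
    bval (bpermSnocEquiv n (q, s)).1 (n + 1) = if s then -((n : ℤ) + 1) else (n : ℤ) + 1 := by
  have h := bval_succ (bpermSnocEquiv n (q, s)).1 (Fin.last n)
  simp only [bpermSnocEquiv_apply_coe, Fin.snoc_last, (permEquivFixingLast n q.1).2,
    Fin.val_last] at h
  exact h

lemma desB_bpermSnocEquiv (q : BPerm n) (s : Bool) :
    desB (bpermSnocEquiv n (q, s)).1 = desB q + if s then 1 else 0 := by
  rw [desB_eq_sum, desB_eq_sum, sum_range_succ]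
  congr 1
  · refine sum_congr rfl fun k hk => ?_
    have hk := mem_range.1 hk
    rw [bval_bpermSnocEquiv_of_le q s hk.le, bval_bpermSnocEquiv_of_le q s hk]
  · rw [bval_bpermSnocEquiv_last, bval_bpermSnocEquiv_of_le q s le_rfl]
    have := abs_le.1 (abs_bval_le q n)
    cases s <;> simp only [if_true, if_false, Bool.false_eq_true] <;> split_ifs <;> omega

lemma sgnB_bpermSnocEquiv (q : BPerm n) (s : Bool) :
    sgnB (bpermSnocEquiv n (q, s)).1 = (if s then -1 else 1) * sgnB q := by
  simp only [sgnB_eq_sign_mul_prod, bpermSnocEquiv_apply_coe, sign_permEquivFixingLast,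
    Fin.prod_univ_castSucc, Fin.snoc_castSucc, Fin.snoc_last]
  ring

end

noncomputable def signedDescentPoly (n : ℕ) : ℤ[X] :=
  ∑ p : BPerm n, sgnB p • (X : ℤ[X]) ^ desB p

lemma signedDescentPoly_zero : signedDescentPoly 0 = 1 := by
  rw [signedDescentPoly, Fintype.sum_subsingleton _ 1]
  simp [sgnB, desB]

lemma sum_filter_max_eq_last (n : ℕ) :
    ∑ p ∈ univ.filter (fun p : BPerm (n + 1) => p.1 (Fin.last n) = Fin.last n),
      sgnB p • (X : ℤ[X]) ^ desB p = signedDescentPoly n * (1 - X) := by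
  rw [sum_subtype _ (fun p => by rw [mem_filter, and_iff_right (mem_univ p)]),
    ← (bpermSnocEquiv n).sum_comp, Fintype.sum_prod_type, signedDescentPoly, sum_mul]
  refine sum_congr rfl fun q _ => ?_
  simp only [Fintype.sum_bool, sgnB_bpermSnocEquiv, desB_bpermSnocEquiv, zsmul_eq_mul]
  push_cast
  ring

lemma signedDescentPoly_succ (n : ℕ) :
    signedDescentPoly (n + 1) = signedDescentPoly n * (1 - X) := by
  rw [signedDescentPoly,
    ← sum_filter_add_sum_filter_not _ fun p => p.1 (Fin.last n) = Fin.last n,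
    sum_filter_max_eq_last, sum_filter_max_ne_last, add_zero]

theorem typeB_signed_eulerian_general (n : ℕ) :
    ∑ p : BPerm n, (sgnB p) • (Polynomial.X : Polynomial ℤ) ^ (desB p)
      = (1 - Polynomial.X) ^ n := by
  induction n with
  | zero => exact signedDescentPoly_zero
  | succ n ih => rw [← signedDescentPoly, signedDescentPoly_succ, signedDescentPoly, ih, pow_succ]

theorem typeB_signed_eulerian (n : ℕ) (hn : 1 ≤ n) :
    ∑ p : BPerm n, (sgnB p) • (Polynomial.X : Polynomial ℤ) ^ (desB p)
      = (1 - Polynomial.X) ^ n :=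
  typeB_signed_eulerian_general n
end

section
/- For all n ≥ 1, the type B positive Eulerian polynomial B_n^+(t) = ∑_{w ∈ B_n, sgn_B(w)=1} t^{des_B(w)} satisfies B_n^+(t)/(1-t)^{n+1} = ∑_{k ≥ 0} (((2k+1)^n + 1)/2) t^k as formal power series. -/
open scoped Classical

/-!
Every lattice point `f ∈ [-k, k]ⁿ` lies in exactly one half-open chamber
`0 ≤ f(w(1)) ≤ ⋯ ≤ f(w(n))` (strict at the descents of `w`), `w ∈ B_n`, and the chamber of `w`
contains `C(n + k - des_B w, n)` of these points. Counting the cube chamber by chamber gives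
`∑_w C(n + k - des_B w, n) = (2k + 1)ⁿ`; summing `sgn_B` of the chamber over the cube gives `1`,
because negating the first coordinate of maximal absolute value of a nonzero point moves it to a
chamber of opposite sign. Hence `∑_{sgn_B w = 1} C(n + k - des_B w, n) = ((2k + 1)ⁿ + 1) / 2`,
and these are the coefficients of `B_n⁺(t) / (1 - t)^(n + 1)`.
-/

lemma toLex_lt_toLex_iff_of_ne {α β : Type*} [LinearOrder α] [LinearOrder β] {a a' : α}
    {b b' : β} (hb : b ≠ b') :
    toLex (a, b) < toLex (a', b') ↔ a ≤ a' ∧ (b' < b → a < a') := by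
  rw [Prod.Lex.toLex_lt_toLex, lt_iff_le_and_ne (a := b), and_iff_left hb]
  rcases lt_trichotomy a a' with h | rfl | h
  · simp [h, h.le]
  · simp
  · simp [h.not_gt, h.ne', h.not_ge]

lemma lt_iff_pos_of_abs_lt {α : Type*} [AddCommGroup α] [LinearOrder α] [IsOrderedAddMonoid α]
    {a b : α} (h : |a| < |b|) : a < b ↔ 0 < b := by
  have := abs_lt.mp h
  rcases abs_cases b with ⟨hb, hb0⟩ | ⟨hb, hb0⟩ <;> rw [hb] at this <;> grind

lemma lt_iff_neg_of_abs_lt {α : Type*} [AddCommGroup α] [LinearOrder α] [IsOrderedAddMonoid α]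
    {a b : α} (h : |a| < |b|) : b < a ↔ b < 0 := by
  rw [← abs_neg a, ← abs_neg b] at h
  simpa using lt_iff_pos_of_abs_lt h

open Finset

namespace PowerSeries

theorem sum_X_pow_eq_one_sub_X_pow_mul_mk {R ι : Type*} [CommRing R] (s : Finset ι) (d : ι → ℕ)
    (n : ℕ) (a : ℕ → R) (hd : ∀ i ∈ s, d i ≤ n)
    (h : ∀ k, ∑ i ∈ s, ((n + k - d i).choose n : R) = a k) :
    ∑ i ∈ s, (X : R⟦X⟧) ^ d i = (1 - X) ^ (n + 1) * mk a := by
  have hmul : (∑ i ∈ s, (X : R⟦X⟧) ^ d i) * mk (fun b => ((n + b).choose n : R)) = mk a := by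
    ext k
    rw [coeff_mk, ← h, sum_mul, map_sum]
    refine sum_congr rfl fun i hi => ?_
    rw [coeff_X_pow_mul']
    split_ifs with hk
    · rw [coeff_mk, Nat.add_sub_assoc hk]
    · rw [Nat.choose_eq_zero_of_lt (by have := hd i hi; omega), Nat.cast_zero]
  calc ∑ i ∈ s, (X : R⟦X⟧) ^ d i
      = (∑ i ∈ s, X ^ d i) * (mk (fun b => ((n + b).choose n : R)) * (1 - X) ^ (n + 1)) := by
        rw [mk_add_choose_mul_one_sub_pow_eq_one, mul_one]
    _ = (1 - X) ^ (n + 1) * mk a := by rw [← mul_assoc, hmul, mul_comm]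

end PowerSeries

namespace BPerm

variable {n : ℕ}

/-- `readAlong p f i = f(w(i))` for `f` extended to signed letters by `f(-v) = -f(v)`, and
`w(0) = 0`. -/
def readAlong (p : BPerm n) (f : Fin n → ℤ) : ℕ → ℤ
  | 0 => 0
  | i + 1 => if h : i < n then (if p.2 ⟨i, h⟩ then -f (p.1 ⟨i, h⟩) else f (p.1 ⟨i, h⟩)) else 0

@[simp] lemma readAlong_zero (p : BPerm n) (f : Fin n → ℤ) : readAlong p f 0 = 0 := rfl

lemma readAlong_succ (p : BPerm n) (f : Fin n → ℤ) (j : Fin n) :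
    readAlong p f (j + 1) = if p.2 j then -f (p.1 j) else f (p.1 j) := by
  simp [readAlong]

lemma bval_eq_readAlong (p : BPerm n) : bval p = readAlong p (fun v => (v : ℤ) + 1) := by
  funext i
  rcases i with _ | i
  · simp [bval]
  · by_cases hi : i < n <;> simp [bval, readAlong, hi]

lemma abs_bval_succ (p : BPerm n) (j : Fin n) : |bval p (j + 1)| = (p.1 j : ℤ) + 1 := by
  rw [bval_eq_readAlong, readAlong_succ]
  split_ifs <;> simp only [abs_neg, abs_eq_self] <;> positivity

lemma bval_succ_ne (p : BPerm n) {i : ℕ} (hi : i < n) : bval p (i + 1) ≠ bval p i := by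
  intro h
  have habs := congrArg abs h
  rw [abs_bval_succ p ⟨i, hi⟩] at habs
  rcases i with _ | i
  · simp [bval] at habs
    omega
  · rw [abs_bval_succ p ⟨i, by omega⟩] at habs
    have := p.1.injective (Fin.ext (by simpa using habs))
    simp at this

def InChamber (p : BPerm n) (f : Fin n → ℤ) : Prop :=
  ∀ i < n, readAlong p f i ≤ readAlong p f (i + 1) ∧
    (bval p (i + 1) < bval p i → readAlong p f i < readAlong p f (i + 1))

noncomputable def chamberKey (p : BPerm n) (f : Fin n → ℤ) (i : ℕ) : ℤ ×ₗ ℤ :=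
  toLex (readAlong p f i, bval p i)

lemma inChamber_iff_chamberKey_lt (p : BPerm n) (f : Fin n → ℤ) :
    InChamber p f ↔ ∀ i < n, chamberKey p f i < chamberKey p f (i + 1) := by
  refine forall₂_congr fun i hi => ?_
  rw [chamberKey, chamberKey, toLex_lt_toLex_iff_of_ne (bval_succ_ne p hi).symm]

def signedIndex (f : Fin n → ℤ) (v : Fin n) : ℤ :=
  if f v < 0 then -((v : ℤ) + 1) else (v : ℤ) + 1

/-- Ordering the coordinates of `f` by `sortKey` picks out the unique chamber containing `f`: by
increasing `|f v|`, ties broken by the order `-n < ⋯ < -1 < 1 < ⋯ < n` of the signed letters. -/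
def sortKey (f : Fin n → ℤ) (v : Fin n) : ℤ ×ₗ ℤ :=
  toLex (|f v|, signedIndex f v)

lemma abs_signedIndex (f : Fin n → ℤ) (v : Fin n) : |signedIndex f v| = (v : ℤ) + 1 := by
  unfold signedIndex
  split_ifs <;> simp only [abs_neg, abs_eq_self] <;> positivity

lemma sortKey_injective (f : Fin n → ℤ) : Function.Injective (sortKey f) := by
  intro v w h
  have := congrArg (fun x => |(ofLex x).2|) h
  simp only [sortKey, ofLex_toLex, abs_signedIndex, add_left_inj, Nat.cast_inj] at this
  exact Fin.ext this

def SortsByKey (p : BPerm n) (f : Fin n → ℤ) : Prop :=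
  (∀ j, p.2 j = true ↔ f (p.1 j) < 0) ∧ StrictMono (sortKey f ∘ p.1)

lemma sign_iff_chamberKey_zero_lt (p : BPerm n) (f : Fin n → ℤ) (j : Fin n) :
    (p.2 j = true ↔ f (p.1 j) < 0) ↔ chamberKey p f 0 < chamberKey p f (j + 1) := by
  rw [chamberKey, chamberKey, bval_eq_readAlong, readAlong_succ, readAlong_succ, readAlong_zero,
    readAlong_zero, Prod.Lex.toLex_lt_toLex]
  have hpos : (0 : ℤ) < (p.1 j : ℤ) + 1 := by positivity
  cases p.2 j <;> simp only [Bool.false_eq_true, if_false, if_true, false_iff, true_iff, not_lt,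
    lt_neg, neg_zero, le_iff_lt_or_eq] <;> omega

lemma chamberKey_succ_eq_sortKey {p : BPerm n} {f : Fin n → ℤ} {j : Fin n}
    (h : p.2 j = true ↔ f (p.1 j) < 0) : chamberKey p f (j + 1) = sortKey f (p.1 j) := by
  rw [chamberKey, sortKey, signedIndex, bval_eq_readAlong, readAlong_succ, readAlong_succ]
  cases hp : p.2 j
  · have : ¬ f (p.1 j) < 0 := by simpa [hp] using h
    simp [this, abs_of_nonneg (not_lt.mp this)]
  · have : f (p.1 j) < 0 := by simpa [hp] using h
    simp [this, abs_of_neg this]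

lemma inChamber_iff_sortsByKey {p : BPerm n} {f : Fin n → ℤ} :
    InChamber p f ↔ SortsByKey p f := by
  rw [inChamber_iff_chamberKey_lt]
  constructor
  · intro h
    have hmono : StrictMonoOn (chamberKey p f) (Set.Iic n) :=
      strictMonoOn_of_lt_add_one Set.ordConnected_Iic fun i _ _ hi => h i hi
    have hsign : ∀ j : Fin n, p.2 j = true ↔ f (p.1 j) < 0 := fun j =>
      (sign_iff_chamberKey_zero_lt p f j).mpr <|
        hmono (Set.mem_Iic.mpr (Nat.zero_le n)) (Set.mem_Iic.mpr j.2) (Nat.succ_pos j)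
    refine ⟨hsign, fun a b hab => ?_⟩
    rw [Function.comp_apply, Function.comp_apply, ← chamberKey_succ_eq_sortKey (hsign a),
      ← chamberKey_succ_eq_sortKey (hsign b)]
    exact hmono (Set.mem_Iic.mpr a.2) (Set.mem_Iic.mpr b.2) (Nat.succ_lt_succ hab)
  · rintro ⟨hsign, hmono⟩ (_ | i) hi
    · exact (sign_iff_chamberKey_zero_lt p f ⟨0, hi⟩).mp (hsign _)
    · rw [chamberKey_succ_eq_sortKey (j := ⟨i, by omega⟩) (hsign _),
        chamberKey_succ_eq_sortKey (j := ⟨i + 1, hi⟩) (hsign _)]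
      exact hmono (Fin.mk_lt_mk.mpr (lt_add_one i))

noncomputable def chamber (f : Fin n → ℤ) : BPerm n :=
  (Tuple.sort (sortKey f), fun j => decide (f (Tuple.sort (sortKey f) j) < 0))

lemma chamber_eq_iff_sortsByKey {f : Fin n → ℤ} {p : BPerm n} :
    chamber f = p ↔ SortsByKey p f := by
  have hinj := (sortKey_injective f).comp p.1.injective
  have hsort : p.1 = Tuple.sort (sortKey f) ↔ StrictMono (sortKey f ∘ p.1) := by
    rw [Tuple.eq_sort_iff]
    exact ⟨fun h => h.1.strictMono_of_injective hinj,
      fun h => ⟨h.monotone, fun i j hij hEq => absurd (hinj hEq) hij.ne⟩⟩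
  rw [SortsByKey, ← hsort]
  constructor
  · rintro rfl
    exact ⟨fun j => by simp [chamber], rfl⟩
  · rintro ⟨hsign, hp⟩
    refine Prod.ext hp.symm (funext fun j => ?_)
    rw [Bool.eq_iff_iff, hsign]
    simp [chamber, hp]

lemma chamber_eq_iff {f : Fin n → ℤ} {p : BPerm n} : chamber f = p ↔ InChamber p f :=
  chamber_eq_iff_sortsByKey.trans inChamber_iff_sortsByKey.symm

noncomputable def descentsBelow (p : BPerm n) (i : ℕ) : ℕ :=
  #{t ∈ range i | bval p (t + 1) < bval p t}

lemma descentsBelow_succ (p : BPerm n) (i : ℕ) :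
    descentsBelow p (i + 1) = descentsBelow p i + if bval p (i + 1) < bval p i then 1 else 0 := by
  rw [descentsBelow, descentsBelow, range_add_one, filter_insert]
  split_ifs
  · rw [card_insert_of_notMem (by simp)]
  · rw [add_zero]

lemma descentsBelow_le (p : BPerm n) (i : ℕ) : descentsBelow p i ≤ i :=
  (card_filter_le _ _).trans (card_range i).le

lemma descentsBelow_self (p : BPerm n) : descentsBelow p n = desB p := rfl

lemma desB_le (p : BPerm n) : desB p ≤ n :=
  descentsBelow_le p n

/-- Makes the chamber inequalities strict, so that the points of the chamber of `p` in the cube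
`[-k, k]ⁿ` correspond to the `n`-subsets of `[1, n + k - des_B p]`. -/
noncomputable def shifted (p : BPerm n) (f : Fin n → ℤ) (i : ℕ) : ℤ :=
  readAlong p f i + i - descentsBelow p i

lemma inChamber_iff_shifted_lt {p : BPerm n} {f : Fin n → ℤ} :
    InChamber p f ↔ ∀ i < n, shifted p f i < shifted p f (i + 1) := by
  refine forall₂_congr fun i _ => ?_
  rw [shifted, shifted, descentsBelow_succ]
  split_ifs <;> push_cast <;> omega

def ofReadAlong (p : BPerm n) (a : Fin n → ℤ) (v : Fin n) : ℤ :=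
  if p.2 (p.1.symm v) then -a (p.1.symm v) else a (p.1.symm v)

lemma readAlong_ofReadAlong (p : BPerm n) (a : Fin n → ℤ) (j : Fin n) :
    readAlong p (ofReadAlong p a) (j + 1) = a j := by
  rw [readAlong_succ, ofReadAlong]
  split_ifs <;> simp_all

lemma ofReadAlong_readAlong (p : BPerm n) (f : Fin n → ℤ) :
    ofReadAlong p (fun j => readAlong p f (j + 1)) = f := by
  funext v
  rw [ofReadAlong, readAlong_succ]
  split_ifs <;> simp_all

noncomputable def box (n k : ℕ) : Finset (Fin n → ℤ) :=
  Fintype.piFinset fun _ => Icc (-(k : ℤ)) k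

lemma mem_box {k : ℕ} {f : Fin n → ℤ} : f ∈ box n k ↔ ∀ v, |f v| ≤ k := by
  simp [box, abs_le]

lemma card_box (n k : ℕ) : #(box n k) = (2 * k + 1) ^ n := by
  rw [box, Fintype.card_piFinset, Int.card_Icc, prod_const, card_univ, Fintype.card_fin]
  congr 1
  omega

lemma readAlong_succ_eq_abs {p : BPerm n} {f : Fin n → ℤ} (hf : InChamber p f) (j : Fin n) :
    readAlong p f (j + 1) = |f (p.1 j)| := by
  have hsign := (inChamber_iff_sortsByKey.mp hf).1 j
  rw [readAlong_succ]
  split_ifs with h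
  · exact (abs_of_neg (hsign.mp h)).symm
  · exact (abs_of_nonneg (not_lt.mp (mt hsign.mpr h))).symm

lemma readAlong_le_of_mem_box {k : ℕ} (p : BPerm n) {f : Fin n → ℤ} (hf : f ∈ box n k) (i : ℕ) :
    readAlong p f i ≤ k := by
  rcases i with _ | i
  · simp
  · simp only [readAlong]
    split_ifs
    · exact (neg_le_abs _).trans (mem_box.mp hf _)
    · exact (le_abs_self _).trans (mem_box.mp hf _)
    · positivity

lemma mem_box_iff_shifted_le {k : ℕ} {p : BPerm n} {f : Fin n → ℤ} (hf : InChamber p f) :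
    f ∈ box n k ↔ shifted p f n ≤ n + k - desB p := by
  have hshift : shifted p f n ≤ n + k - desB p ↔ readAlong p f n ≤ k := by
    rw [shifted, descentsBelow_self]
    omega
  rw [hshift]
  refine ⟨fun h => readAlong_le_of_mem_box p h n, fun h => mem_box.mpr fun v => ?_⟩
  have hmono : MonotoneOn (readAlong p f) (Set.Iic n) :=
    monotoneOn_of_le_add_one Set.ordConnected_Iic fun i _ _ hi => (hf i hi).1
  have hv := readAlong_succ_eq_abs hf (p.1.symm v)
  rw [Equiv.apply_symm_apply] at hv
  rw [← hv]
  exact (hmono (Set.mem_Iic.mpr (p.1.symm v).2) (Set.mem_Iic.mpr le_rfl) (p.1.symm v).2).trans h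

lemma strictMonoOn_shifted {p : BPerm n} {f : Fin n → ℤ} (hf : InChamber p f) :
    StrictMonoOn (shifted p f) (Set.Iic n) :=
  strictMonoOn_of_lt_add_one Set.ordConnected_Iic fun i _ _ hi =>
    inChamber_iff_shifted_lt.mp hf i hi

lemma shifted_zero (p : BPerm n) (f : Fin n → ℤ) : shifted p f 0 = 0 := by
  simp [shifted, descentsBelow]

noncomputable def ofShifted (p : BPerm n) (s : Finset ℤ) (h : #s = n) : Fin n → ℤ :=
  ofReadAlong p fun j => s.orderEmbOfFin h j - (j + 1) + descentsBelow p (j + 1)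

lemma shifted_ofShifted (p : BPerm n) (s : Finset ℤ) (h : #s = n) (j : Fin n) :
    shifted p (ofShifted p s h) (j + 1) = s.orderEmbOfFin h j := by
  rw [shifted, ofShifted, readAlong_ofReadAlong]
  push_cast
  ring

lemma strictMono_shifted_succ {p : BPerm n} {f : Fin n → ℤ} (hf : InChamber p f) :
    StrictMono fun j : Fin n => shifted p f (j + 1) := fun a b hab =>
  strictMonoOn_shifted hf (Set.mem_Iic.mpr a.2) (Set.mem_Iic.mpr b.2) (Nat.succ_lt_succ hab)

lemma image_shifted_mem_powersetCard {k : ℕ} {p : BPerm n} {f : Fin n → ℤ} (hbox : f ∈ box n k)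
    (hf : InChamber p f) :
    image (fun j : Fin n => shifted p f (j + 1)) univ ∈
      powersetCard n (Icc (1 : ℤ) (n + k - desB p)) := by
  have hmono := strictMonoOn_shifted hf
  refine mem_powersetCard.mpr ⟨fun x hx => ?_, ?_⟩
  · obtain ⟨j, -, rfl⟩ := mem_image.mp hx
    have hpos := hmono (Set.mem_Iic.mpr (Nat.zero_le n)) (Set.mem_Iic.mpr j.2) (Nat.succ_pos j)
    have hle := hmono.monotoneOn (Set.mem_Iic.mpr j.2) (Set.mem_Iic.mpr le_rfl) j.2
    rw [shifted_zero] at hpos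
    exact mem_Icc.mpr ⟨hpos, hle.trans ((mem_box_iff_shifted_le hf).mp hbox)⟩
  · rw [card_image_of_injective _ (strictMono_shifted_succ hf).injective, card_univ,
      Fintype.card_fin]

lemma ofShifted_mem {k : ℕ} {p : BPerm n} {s : Finset ℤ}
    (hsub : s ⊆ Icc (1 : ℤ) (n + k - desB p)) (hcard : #s = n) : ofShifted p s hcard ∈ {f ∈ box n k | InChamber p f} := by
  have hchamber : InChamber p (ofShifted p s hcard) := by
    refine inChamber_iff_shifted_lt.mpr fun i hi => ?_
    rw [shifted_ofShifted p s hcard ⟨i, hi⟩]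
    rcases i with _ | i
    · rw [shifted_zero]
      exact (mem_Icc.mp (hsub (s.orderEmbOfFin_mem hcard _))).1
    · rw [shifted_ofShifted p s hcard ⟨i, by omega⟩]
      exact (s.orderEmbOfFin hcard).strictMono (Fin.mk_lt_mk.mpr (lt_add_one i))
  refine mem_filter.mpr ⟨(mem_box_iff_shifted_le hchamber).mpr ?_, hchamber⟩
  rcases n with _ | m
  · have := desB_le p
    rw [shifted_zero]
    omega
  · have hlast := shifted_ofShifted p s hcard (Fin.last m)
    rw [Fin.val_last] at hlast
    rw [hlast]
    exact (mem_Icc.mp (hsub (s.orderEmbOfFin_mem hcard _))).2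

lemma card_inChamber (p : BPerm n) (k : ℕ) :
    #{f ∈ box n k | InChamber p f} = (n + k - desB p).choose n := by
  have hM : #(Icc (1 : ℤ) (n + k - desB p)) = n + k - desB p := by
    have := desB_le p
    rw [Int.card_Icc]
    omega
  rw [← hM, ← card_powersetCard]
  refine card_bij' (fun f _ => image (fun j : Fin n => shifted p f (j + 1)) univ)
    (fun s hs => ofShifted p s (mem_powersetCard.mp hs).2)
    (fun f hf => image_shifted_mem_powersetCard (mem_filter.mp hf).1 (mem_filter.mp hf).2)
    (fun s hs => ofShifted_mem (mem_powersetCard.mp hs).1 _) (fun f hf => ?_) (fun s _ => ?_)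
  · rw [ofShifted, ← orderEmbOfFin_unique _ (fun j => mem_image_of_mem _ (mem_univ j))
      (strictMono_shifted_succ (mem_filter.mp hf).2)]
    convert ofReadAlong_readAlong p f using 3 with j
    simp only [shifted]
    push_cast
    ring
  · simp only [shifted_ofShifted, image_orderEmbOfFin_univ]

lemma sum_box_chamber {M : Type*} [AddCommMonoid M] (k : ℕ) (g : BPerm n → M) :
    ∑ f ∈ box n k, g (chamber f) = ∑ p, (n + k - desB p).choose n • g p := by
  rw [← sum_fiberwise' (box n k) chamber g]
  refine sum_congr rfl fun p _ => ?_
  rw [sum_const, filter_congr fun f _ => chamber_eq_iff, card_inChamber]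

lemma nonempty_abs_max {f : Fin n → ℤ} (hf : f ≠ 0) :
    ({v | ∀ w, |f w| ≤ |f v|} : Finset (Fin n)).Nonempty := by
  obtain ⟨v, -⟩ := Function.ne_iff.mp hf
  obtain ⟨u, -, hu⟩ := exists_max_image univ (fun w => |f w|) ⟨v, mem_univ v⟩
  exact ⟨u, mem_filter.mpr ⟨mem_univ u, fun w => hu w (mem_univ w)⟩⟩

noncomputable def pivot (f : Fin n → ℤ) (hf : f ≠ 0) : Fin n :=
  ({v | ∀ w, |f w| ≤ |f v|} : Finset (Fin n)).min' (nonempty_abs_max hf)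

lemma abs_le_abs_pivot {f : Fin n → ℤ} (hf : f ≠ 0) (w : Fin n) : |f w| ≤ |f (pivot f hf)| :=
  (mem_filter.mp (min'_mem _ (nonempty_abs_max hf))).2 w

lemma pivot_le {f : Fin n → ℤ} (hf : f ≠ 0) {w : Fin n} (hw : |f w| = |f (pivot f hf)|) :
    pivot f hf ≤ w :=
  min'_le _ _ (mem_filter.mpr ⟨mem_univ w, fun u => hw ▸ abs_le_abs_pivot hf u⟩)

lemma pivot_ne_zero {f : Fin n → ℤ} (hf : f ≠ 0) : f (pivot f hf) ≠ 0 := by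
  obtain ⟨v, hv⟩ := Function.ne_iff.mp hf
  have := abs_le_abs_pivot hf v
  intro h
  rw [h, abs_zero, abs_nonpos_iff] at this
  exact hv this

noncomputable def flipSign (f : Fin n → ℤ) (hf : f ≠ 0) : Fin n → ℤ :=
  Function.update f (pivot f hf) (-f (pivot f hf))

lemma abs_flipSign {f : Fin n → ℤ} (hf : f ≠ 0) (w : Fin n) : |flipSign f hf w| = |f w| := by
  rw [flipSign, Function.update_apply]
  split_ifs with h
  · rw [h, abs_neg]
  · rfl

lemma flipSign_ne_self {f : Fin n → ℤ} (hf : f ≠ 0) : flipSign f hf ≠ f := fun h => by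
  have := congrFun h (pivot f hf)
  rw [flipSign, Function.update_self] at this
  exact pivot_ne_zero hf (by omega)

lemma flipSign_ne_zero {f : Fin n → ℤ} (hf : f ≠ 0) : flipSign f hf ≠ 0 := fun h =>
  hf (funext fun w => abs_eq_zero.mp (by rw [← abs_flipSign hf, h, Pi.zero_apply, abs_zero]))

lemma pivot_flipSign {f : Fin n → ℤ} (hf : f ≠ 0) :
    pivot (flipSign f hf) (flipSign_ne_zero hf) = pivot f hf := by
  simp only [pivot, abs_flipSign]

lemma flipSign_flipSign {f : Fin n → ℤ} (hf : f ≠ 0) :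
    flipSign (flipSign f hf) (flipSign_ne_zero hf) = f := by
  rw [flipSign, pivot_flipSign]
  funext w
  rcases eq_or_ne w (pivot f hf) with rfl | h
  · rw [Function.update_self, flipSign, Function.update_self, neg_neg]
  · rw [Function.update_of_ne h, flipSign, Function.update_of_ne h]

lemma flipSign_mem_box {k : ℕ} {f : Fin n → ℤ} (hf : f ≠ 0) (hbox : f ∈ box n k) :
    flipSign f hf ∈ box n k :=
  mem_box.mpr fun w => (abs_flipSign hf w).trans_le (mem_box.mp hbox w)

lemma sortKey_flipSign_lt_iff {f : Fin n → ℤ} (hf : f ≠ 0) (x y : Fin n) :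
    sortKey (flipSign f hf) x < sortKey (flipSign f hf) y ↔ sortKey f x < sortKey f y := by
  have hsame : ∀ w ≠ pivot f hf, sortKey (flipSign f hf) w = sortKey f w := fun w hw => by
    simp only [sortKey, signedIndex, flipSign, Function.update_of_ne hw]
  -- a coordinate tied with the pivot has a larger index, so it is compared with the pivot
  -- through its own sign only
  have hidx : ∀ g g' : Fin n → ℤ, ∀ w ≠ pivot f hf, |f w| = |f (pivot f hf)| →
      |signedIndex g (pivot f hf)| < |signedIndex g' w| := fun g g' w hw htie => by
    have := lt_of_le_of_ne (pivot_le hf htie) hw.symm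
    rw [abs_signedIndex, abs_signedIndex]
    exact_mod_cast Nat.succ_lt_succ this
  by_cases hx : x = pivot f hf <;> by_cases hy : y = pivot f hf
  · simp [hx, hy]
  · subst hx
    rw [hsame y hy, sortKey, sortKey, sortKey, Prod.Lex.toLex_lt_toLex, Prod.Lex.toLex_lt_toLex,
      abs_flipSign]
    refine or_congr_right (and_congr_right fun htie => ?_)
    rw [lt_iff_pos_of_abs_lt (hidx _ _ y hy htie.symm),
      lt_iff_pos_of_abs_lt (hidx _ _ y hy htie.symm)]
  · subst hy
    rw [hsame x hx, sortKey, sortKey, sortKey, Prod.Lex.toLex_lt_toLex, Prod.Lex.toLex_lt_toLex,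
      abs_flipSign]
    refine or_congr_right (and_congr_right fun htie => ?_)
    rw [lt_iff_neg_of_abs_lt (hidx _ _ x hx htie), lt_iff_neg_of_abs_lt (hidx _ _ x hx htie)]
  · rw [hsame x hx, hsame y hy]

lemma neg_one_pow_card_filter {ι : Type*} [Fintype ι] (ε : ι → Bool) :
    (-1 : ℤ) ^ #{i | ε i = true} = ∏ i, if ε i then -1 else 1 := by
  rw [prod_ite, prod_const, prod_const_one, mul_one]

lemma sgnB_update_not (σ : Equiv.Perm (Fin n)) (ε : Fin n → Bool) (j : Fin n) :
    sgnB (σ, Function.update ε j (!ε j)) = -sgnB (σ, ε) := by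
  have hrest : ∏ i ∈ univ.erase j, (if Function.update ε j (!ε j) i then (-1 : ℤ) else 1) =
      ∏ i ∈ univ.erase j, if ε i then -1 else 1 :=
    prod_congr rfl fun i hi => by rw [Function.update_of_ne (ne_of_mem_erase hi)]
  rw [sgnB, sgnB, neg_one_pow_card_filter, neg_one_pow_card_filter,
    ← mul_prod_erase univ _ (mem_univ j), ← mul_prod_erase univ _ (mem_univ j), hrest]
  cases h : ε j <;> simp [h]

lemma sgnB_chamber_flipSign {f : Fin n → ℤ} (hf : f ≠ 0) :
    sgnB (chamber (flipSign f hf)) = -sgnB (chamber f) := by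
  set p := chamber f with hp
  set j₀ := p.1.symm (pivot f hf)
  obtain ⟨hsign, hmono⟩ := chamber_eq_iff_sortsByKey.mp hp.symm
  have hflip : chamber (flipSign f hf) = (p.1, Function.update p.2 j₀ (!p.2 j₀)) := by
    refine chamber_eq_iff_sortsByKey.mpr
      ⟨fun j => ?_, fun a b hab => (sortKey_flipSign_lt_iff hf _ _).mpr (hmono hab)⟩
    dsimp only
    have hv : p.1 j₀ = pivot f hf := p.1.apply_symm_apply _
    rcases eq_or_ne j j₀ with rfl | hj
    · have h0 := pivot_ne_zero hf
      have hj₀ := hsign j₀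
      rw [Function.update_self, hv, flipSign, Function.update_self]
      rw [hv] at hj₀
      cases hb : p.2 j₀ <;> simp only [hb, Bool.not_false, Bool.not_true, true_iff,
        Bool.false_eq_true, false_iff, not_lt] at hj₀ ⊢ <;> omega
    · have hne : p.1 j ≠ pivot f hf := fun h => hj (p.1.injective (h.trans hv.symm))
      rw [Function.update_of_ne hj, flipSign, Function.update_of_ne hne]
      exact hsign j
  rw [hflip, sgnB_update_not]

lemma chamber_zero : chamber (0 : Fin n → ℤ) = (1, fun _ => false) := by
  refine chamber_eq_iff_sortsByKey.mpr ⟨fun j => by simp, fun a b hab => ?_⟩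
  simpa [sortKey, signedIndex, Prod.Lex.toLex_lt_toLex] using hab

lemma sum_box_sgnB_chamber (k : ℕ) : ∑ f ∈ box n k, sgnB (chamber f) = 1 := by
  have h0 : (0 : Fin n → ℤ) ∈ box n k := mem_box.mpr fun _ => by simp
  have hcancel : ∑ f ∈ (box n k).erase 0, sgnB (chamber f) = 0 :=
    sum_involution (fun f hf => flipSign f (ne_of_mem_erase hf))
      (fun f _ => by rw [sgnB_chamber_flipSign, add_neg_cancel])
      (fun f _ _ => flipSign_ne_self _)
      (fun f hf => mem_erase.mpr ⟨flipSign_ne_zero _, flipSign_mem_box _ (mem_of_mem_erase hf)⟩)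
      (fun f _ => flipSign_flipSign _)
  rw [← add_sum_erase _ _ h0, hcancel, add_zero, chamber_zero]
  simp [sgnB]

lemma sgnB_eq_one_or_neg_one (p : BPerm n) : sgnB p = 1 ∨ sgnB p = -1 := by
  rw [sgnB]
  rcases Int.units_eq_one_or (Equiv.Perm.sign p.1) with h | h <;>
    rcases neg_one_pow_eq_or ℤ #{i | p.2 i = true} with h' | h' <;> simp [h, h']

theorem sum_choose_desB (n k : ℕ) :
    ∑ p : BPerm n, (n + k - desB p).choose n = (2 * k + 1) ^ n := by
  have := sum_box_chamber k fun _ : BPerm n => 1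
  simp only [smul_eq_mul, mul_one, ← card_eq_sum_ones, card_box] at this
  exact this.symm

theorem sum_choose_desB_mul_sgnB (n k : ℕ) :
    ∑ p : BPerm n, ((n + k - desB p).choose n : ℤ) * sgnB p = 1 := by
  simp only [← nsmul_eq_mul, ← sum_box_chamber, sum_box_sgnB_chamber]

theorem sum_choose_desB_of_sgnB_eq_one (n k : ℕ) :
    ∑ p : BPerm n with sgnB p = 1, ((n + k - desB p).choose n : ℚ) =
      ((2 * k + 1) ^ n + 1) / 2 := by
  have hall := congrArg (Nat.cast : ℕ → ℚ) (sum_choose_desB n k)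
  have hsgn := congrArg (Int.cast : ℤ → ℚ) (sum_choose_desB_mul_sgnB n k)
  push_cast at hall hsgn
  rw [sum_filter, eq_div_iff two_ne_zero, sum_mul, ← hall, ← hsgn, ← sum_add_distrib]
  refine sum_congr rfl fun p _ => ?_
  rcases sgnB_eq_one_or_neg_one p with h | h <;> simp [h]; ring

end BPerm

theorem typeB_positive_eulerian_series_general (n : ℕ) :
    ∑ p ∈ Finset.univ.filter (fun p : BPerm n => sgnB p = 1),
        (PowerSeries.X : PowerSeries ℚ) ^ (desB p)
      = (1 - PowerSeries.X) ^ (n + 1) *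
          PowerSeries.mk (fun k => ((2 * (k : ℚ) + 1) ^ n + 1) / 2) :=
  PowerSeries.sum_X_pow_eq_one_sub_X_pow_mul_mk _ desB n _ (fun p _ => BPerm.desB_le p)
    (BPerm.sum_choose_desB_of_sgnB_eq_one n)

theorem typeB_positive_eulerian_series (n : ℕ) (hn : 1 ≤ n) :
    ∑ p ∈ Finset.univ.filter (fun p : BPerm n => sgnB p = 1),
        (PowerSeries.X : PowerSeries ℚ) ^ (desB p)
      = (1 - PowerSeries.X) ^ (n + 1) *
          PowerSeries.mk (fun k => ((2 * (k : ℚ) + 1) ^ n + 1) / 2) :=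
  typeB_positive_eulerian_series_general n
end

section
/- For all even n ≥ 2 and 0 ≤ k ≤ n, the number of positively signed w ∈ B_n with k descents equals the number of positively signed w ∈ B_n with n-k descents; for all odd n ≥ 1, the number of positively signed w ∈ B_n with k descents equals the number of negatively signed w ∈ B_n with n-k descents. -/
open scoped Classical

def bneg {n : ℕ} (p : BPerm n) : BPerm n := (p.1, fun j => !p.2 j)

lemma bneg_bneg {n : ℕ} (p : BPerm n) : bneg (bneg p) = p := by
  simp [bneg]

lemma bval_bneg {n : ℕ} (p : BPerm n) (i : ℕ) : bval (bneg p) i = - bval p i := by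
  unfold bval bneg
  split
  · cases hb : p.2 ⟨i - 1, by omega⟩ <;> simp [hb]
  · simp

lemma bval_natAbs {n : ℕ} (p : BPerm n) (i : ℕ) (h1 : 1 ≤ i) (h2 : i ≤ n) :
    (bval p i).natAbs = ((p.1 ⟨i - 1, by omega⟩ : Fin n) : ℕ) + 1 := by
  unfold bval
  rw [dif_pos ⟨h1, h2⟩]
  split <;> omega

lemma bval_ne {n : ℕ} (p : BPerm n) (i : ℕ) (hi : i < n) : bval p i ≠ bval p (i + 1) := by
  rcases Nat.eq_zero_or_pos i with h0 | h1
  · subst h0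
    have h0v : bval p 0 = 0 := by unfold bval; simp
    have h1v : (bval p 1).natAbs = ((p.1 ⟨0, by omega⟩ : Fin n) : ℕ) + 1 :=
      bval_natAbs p 1 le_rfl (by omega)
    rw [h0v]
    intro h
    rw [← h] at h1v
    simp at h1v
  · intro heq
    have ha := bval_natAbs p i h1 hi.le
    have hb := bval_natAbs p (i + 1) (by omega) (by omega)
    rw [heq] at ha
    have hval : ((p.1 ⟨i - 1, by omega⟩ : Fin n) : ℕ) = ((p.1 ⟨i + 1 - 1, by omega⟩ : Fin n) : ℕ) := by
      omega
    have h2 := p.1.injective (Fin.val_injective hval)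
    have h3 : i - 1 = i + 1 - 1 := congrArg Fin.val h2
    omega

lemma desB_bneg {n : ℕ} (p : BPerm n) : desB (bneg p) = n - desB p := by
  unfold desB
  have key : ∀ i ∈ Finset.range n,
      (bval (bneg p) (i + 1) < bval (bneg p) i ↔ ¬ (bval p (i + 1) < bval p i)) := by
    intro i hi
    rw [bval_bneg, bval_bneg, neg_lt_neg_iff]
    have hne := bval_ne p i (Finset.mem_range.mp hi)
    constructor
    · intro h; omega
    · intro h; omega
  rw [Finset.filter_congr key, Finset.filter_not,
    Finset.card_sdiff_of_subset (Finset.filter_subset _ _), Finset.card_range]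

lemma sgnB_bneg {n : ℕ} (p : BPerm n) : sgnB (bneg p) = (-1) ^ n * sgnB p := by
  unfold sgnB bneg
  have hcard : (Finset.univ.filter (fun i => (!p.2 i) = true)).card
      = n - (Finset.univ.filter (fun i => p.2 i = true)).card := by
    have : (Finset.univ.filter (fun i => (!p.2 i) = true))
        = Finset.univ.filter (fun i : Fin n => ¬ (p.2 i = true)) := by
      apply Finset.filter_congr; intro i _; simp
    rw [this, Finset.filter_not, Finset.card_sdiff_of_subset (Finset.filter_subset _ _)]
    simp
  set c := (Finset.univ.filter (fun i => p.2 i = true)).card with hc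
  have hcle : c ≤ n := by
    rw [hc]; exact (Finset.card_filter_le _ _).trans (by simp)
  rw [hcard]
  have hpow : ((-1 : ℤ)) ^ (n - c) = (-1) ^ n * (-1) ^ c := by
    have h1 : ((-1 : ℤ)) ^ (n - c) * (-1) ^ c = (-1) ^ n := by
      rw [← pow_add]; congr 1; omega
    have h2 : ((-1 : ℤ)) ^ c * (-1) ^ c = 1 := by
      rw [← pow_add, ← two_mul, pow_mul]; norm_num
    calc ((-1 : ℤ)) ^ (n - c) = (-1) ^ (n - c) * ((-1) ^ c * (-1) ^ c) := by rw [h2, mul_one]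
      _ = ((-1) ^ (n - c) * (-1) ^ c) * (-1) ^ c := by ring
      _ = (-1) ^ n * (-1) ^ c := by rw [h1]
  rw [hpow]; ring

theorem typeB_pm_eulerian_symmetry (n k : ℕ) (hk : k ≤ n) :
    (2 ≤ n → Even n →
      (Finset.univ.filter (fun p : BPerm n => sgnB p = 1 ∧ desB p = k)).card
        = (Finset.univ.filter (fun p : BPerm n => sgnB p = 1 ∧ desB p = n - k)).card) ∧
    (1 ≤ n → Odd n →
      (Finset.univ.filter (fun p : BPerm n => sgnB p = 1 ∧ desB p = k)).card
        = (Finset.univ.filter (fun p : BPerm n => sgnB p = -1 ∧ desB p = n - k)).card) := by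
  constructor
  · intro _ hev
    have hpow : ((-1 : ℤ)) ^ n = 1 := hev.neg_one_pow
    apply Finset.card_bij' (fun p _ => bneg p) (fun p _ => bneg p)
    · intro p hp
      simp only [Finset.mem_filter, Finset.mem_univ, true_and] at hp ⊢
      exact ⟨by rw [sgnB_bneg, hpow, hp.1, mul_one], by rw [desB_bneg, hp.2]⟩
    · intro p hp
      simp only [Finset.mem_filter, Finset.mem_univ, true_and] at hp ⊢
      exact ⟨by rw [sgnB_bneg, hpow, hp.1, mul_one], by rw [desB_bneg, hp.2]; omega⟩
    · intro p _; exact bneg_bneg p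
    · intro p _; exact bneg_bneg p
  · intro _ hodd
    have hpow : ((-1 : ℤ)) ^ n = -1 := hodd.neg_one_pow
    apply Finset.card_bij' (fun p _ => bneg p) (fun p _ => bneg p)
    · intro p hp
      simp only [Finset.mem_filter, Finset.mem_univ, true_and] at hp ⊢
      exact ⟨by rw [sgnB_bneg, hpow, hp.1]; ring, by rw [desB_bneg, hp.2]⟩
    · intro p hp
      simp only [Finset.mem_filter, Finset.mem_univ, true_and] at hp ⊢
      exact ⟨by rw [sgnB_bneg, hpow, hp.1]; ring, by rw [desB_bneg, hp.2]; omega⟩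
    · intro p _; exact bneg_bneg p
    · intro p _; exact bneg_bneg p
end

section
/- For any k ≥ 1, the formal power series identity ∏_{j ≥ 1} (1 - u^j/k^j)^{-f_{j,k}} = 1/(1-u) holds, where f_{j,k} = (1/j) ∑_{d | j} μ(d) k^{j/d} and μ is the Möbius function. -/
/-!
Write `f_j = necklaceCount j k`. Möbius inversion gives `∑_{d ∣ n} d f_d = k^n`, and each `f_j`
is a nonnegative integer: `n ∣ ∑_{d ∣ n} μ(d) k^{n/d}` because, for `p^a ∥ n`, the divisors `d`
and `p d` pair up into differences `k^{p^a s} - k^{p^{a-1} s} ≡ 0 mod p^a`, and the sum is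
nonnegative since `k^n` dominates the geometric sum of the other terms.

For the power series, compare logarithmic derivatives: `X (log P)'` for
`P = ∏_{j ≤ N} (1 - X^j/k^j)^{-f_j}` is `∑_j j f_j ((1 - X^j/k^j)^{-1} - 1)`, whose `n`-th
coefficient for `1 ≤ n ≤ N` is `k^{-n} ∑_{d ∣ n} d f_d = 1`, exactly the coefficient of
`X (log (1 - X)^{-1})' = X/(1 - X)`. Two series with equal nonzero constant terms whose logarithmic
derivatives agree below degree `N` agree below degree `N + 1`.
-/

open scoped Classical

/-- `f_{j,k} = (1/j) ∑_{d ∣ j} μ(d) k^{j/d}`, the number of primitive necklaces of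
length `j` on `k` letters (an integer division that is exact for `j ≥ 1`). -/
noncomputable def necklaceCount (j k : ℕ) : ℤ :=
  (∑ d ∈ Nat.divisors j, (ArithmeticFunction.moebius d) * (k : ℤ) ^ (j / d)) / j

open Finset ArithmeticFunction
open scoped ArithmeticFunction.Moebius ArithmeticFunction.zeta

def necklaceSum (n : ℕ) (c : ℤ) : ℤ := ∑ d ∈ n.divisors, μ d * c ^ (n / d)

theorem sum_divisors_necklaceSum {n : ℕ} (hn : n ≠ 0) (c : ℤ) :
    ∑ d ∈ n.divisors, necklaceSum d c = c ^ n := by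
  refine (sum_eq_iff_sum_mul_moebius_eq (f := (necklaceSum · c)) (g := (c ^ ·))).mpr
    (fun m _ => ?_) n (Nat.pos_of_ne_zero hn)
  simp only [Int.cast_id]
  exact Nat.sum_divisorsAntidiagonal (fun d e => μ d * c ^ e)

theorem necklaceSum_eq_sum_moebius_div (n : ℕ) (c : ℤ) :
    necklaceSum n c = ∑ d ∈ n.divisors, μ (n / d) * c ^ d := by
  rw [necklaceSum, ← Nat.sum_divisorsAntidiagonal (fun d e => μ d * c ^ e),
    Nat.sum_divisorsAntidiagonal' (fun d e => μ d * c ^ e)]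

theorem necklaceSum_nonneg (n c : ℕ) : 0 ≤ necklaceSum n c := by
  rcases Nat.lt_trichotomy c 1 with hc | rfl | hc
  · obtain rfl : c = 0 := by omega
    refine sum_nonneg fun d hd => ?_
    rw [Nat.cast_zero, zero_pow (Nat.div_pos (Nat.divisor_le hd) (Nat.pos_of_mem_divisors hd)).ne',
      mul_zero]
  · have hsum : necklaceSum n 1 = ∑ d ∈ n.divisors, μ d := by simp [necklaceSum]
    rw [Nat.cast_one, hsum, ← coe_mul_zeta_apply, moebius_mul_coe_zeta, one_apply]
    positivity
  · rcases eq_or_ne n 0 with rfl | hn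
    · simp [necklaceSum]
    have hlt : ∑ d ∈ n.properDivisors, (c : ℤ) ^ d < (c : ℤ) ^ n := by
      exact_mod_cast Nat.geomSum_lt hc fun d hd => Nat.mem_properDivisors.mp hd |>.2
    have hle : -∑ d ∈ n.properDivisors, (c : ℤ) ^ d ≤
        ∑ d ∈ n.properDivisors, μ (n / d) * (c : ℤ) ^ d := by
      rw [← sum_neg_distrib]
      refine sum_le_sum fun d _ => ?_
      have hμ := abs_le.mp (abs_moebius_le_one (n := n / d))
      nlinarith [pow_pos (show (0 : ℤ) < c by omega) d]
    rw [necklaceSum_eq_sum_moebius_div,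
      ← Nat.cons_self_properDivisors hn, sum_cons,
      Nat.div_self (Nat.pos_of_ne_zero hn), moebius_apply_one, one_mul]
    linarith

theorem prime_pow_dvd_pow_sub_pow_div {p a m : ℕ} (hp : p.Prime) (h : p ^ (a + 1) ∣ m) (c : ℤ) :
    (p : ℤ) ^ (a + 1) ∣ c ^ m - c ^ (m / p) := by
  obtain ⟨s, rfl⟩ := h
  have key := dvd_sub_pow_of_dvd_sub (Int.prime_dvd_pow_self_sub hp (c ^ s)) a
  rw [Nat.pow_succ', mul_assoc, Nat.mul_div_cancel_left _ hp.pos]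
  rwa [← pow_mul, ← pow_mul, ← pow_mul, mul_comm s, mul_comm s, mul_assoc] at key

theorem sum_divisors_moebius_mul_eq_sum_not_dvd (f : ℕ → ℤ) {p n : ℕ} (hp : p.Prime)
    (hpn : p ∣ n) (hn : n ≠ 0) :
    ∑ d ∈ n.divisors, μ d * f (n / d) =
      ∑ d ∈ n.divisors with ¬p ∣ d, μ d * (f (n / d) - f (n / d / p)) := by
  have hcop {e : ℕ} (he : ¬p ∣ e) : p.Coprime e := hp.coprime_iff_not_dvd.mpr he
  -- A divisor `d = p e` with `p ∣ e` is not squarefree, so only `e` prime to `p` contribute.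
  have hmul : ∑ d ∈ n.divisors with p ∣ d, μ d * f (n / d) =
      ∑ e ∈ n.divisors with ¬p ∣ e, μ (p * e) * f (n / (p * e)) := by
    rw [← sum_image (f := fun d => μ d * f (n / d)) (mul_right_injective₀ hp.ne_zero).injOn]
    refine (sum_subset (fun d hd => ?_) fun d hd himage => ?_).symm
    · obtain ⟨e, he, rfl⟩ := mem_image.mp hd
      simp only [mem_filter, Nat.mem_divisors] at he ⊢
      exact ⟨⟨(hcop he.2).mul_dvd_of_dvd_of_dvd hpn he.1.1, hn⟩, dvd_mul_right p e⟩
    · obtain ⟨hdn, e, rfl⟩ := mem_filter.mp hd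
      have hpe : p ∣ e := by
        by_contra hpe
        exact himage (mem_image.mpr ⟨e, mem_filter.mpr
          ⟨Nat.mem_divisors.mpr ⟨(dvd_mul_left e p).trans (Nat.dvd_of_mem_divisors hdn), hn⟩, hpe⟩,
          rfl⟩)
      have hsq : ¬Squarefree (p * e) := fun h =>
        hp.not_isUnit (h p (Nat.mul_dvd_mul_left p hpe))
      rw [moebius_eq_zero_of_not_squarefree hsq, zero_mul]
  rw [← sum_filter_not_add_sum_filter n.divisors (p ∣ ·), hmul, ← sum_add_distrib]
  refine sum_congr rfl fun e he => ?_
  rw [isMultiplicative_moebius.map_mul_of_coprime (hcop (mem_filter.mp he).2),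
    moebius_apply_prime hp, mul_comm p, ← Nat.div_div_eq_div_mul]
  ring

theorem ordProj_dvd_necklaceSum (n : ℕ) (c : ℤ) {p : ℕ} (hp : p.Prime) :
    (p : ℤ) ^ n.factorization p ∣ necklaceSum n c := by
  rcases eq_or_ne n 0 with rfl | hn
  · simp [necklaceSum]
  rcases hval : n.factorization p with _ | a
  · exact pow_zero (p : ℤ) ▸ one_dvd _
  have hpa : p ^ (a + 1) ∣ n := hval ▸ Nat.ordProj_dvd n p
  rw [necklaceSum, sum_divisors_moebius_mul_eq_sum_not_dvd (c ^ ·) hp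
    ((dvd_pow_self p a.succ_ne_zero).trans hpa) hn]
  refine dvd_sum fun d hd => dvd_mul_of_dvd_right (prime_pow_dvd_pow_sub_pow_div hp ?_ c) _
  obtain ⟨hdn, hpd⟩ := mem_filter.mp hd
  refine (Nat.Coprime.pow_left _ (hp.coprime_iff_not_dvd.mpr hpd)).dvd_of_dvd_mul_left ?_
  rwa [Nat.mul_div_cancel' (Nat.dvd_of_mem_divisors hdn)]

theorem dvd_necklaceSum (n : ℕ) (c : ℤ) : (n : ℤ) ∣ necklaceSum n c := by
  rcases eq_or_ne n 0 with rfl | hn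
  · simp [necklaceSum]
  rw [Int.natCast_dvd, Nat.dvd_iff_prime_pow_dvd_dvd]
  intro p k hp hpk
  rw [← Int.natCast_dvd, Nat.cast_pow]
  exact (Int.natCast_dvd_natCast.mpr ((hp.pow_dvd_iff_dvd_ordProj hn).mp hpk)).trans
    (by exact_mod_cast ordProj_dvd_necklaceSum n c hp)

theorem mul_necklaceCount (j k : ℕ) : (j : ℤ) * necklaceCount j k = necklaceSum j k :=
  Int.mul_ediv_cancel' (dvd_necklaceSum j k)

theorem necklaceCount_nonneg (j k : ℕ) : 0 ≤ necklaceCount j k :=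
  Int.ediv_nonneg (necklaceSum_nonneg j k) (Int.natCast_nonneg j)

theorem sum_divisors_mul_toNat_necklaceCount {n : ℕ} (hn : n ≠ 0) (k : ℕ) :
    ∑ d ∈ n.divisors, d * (necklaceCount d k).toNat = k ^ n := by
  zify
  simp only [Int.toNat_of_nonneg (necklaceCount_nonneg _ k), mul_necklaceCount]
  exact sum_divisors_necklaceSum hn k

namespace PowerSeries

theorem X_pow_succ_dvd_sub_C_of_X_pow_dvd_derivative {R : Type*} [CommRing R]
    [IsAddTorsionFree R] {f : R⟦X⟧} {n : ℕ} (h : X ^ n ∣ derivative R f) :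
    X ^ (n + 1) ∣ f - C (constantCoeff f) := by
  rw [X_pow_dvd_iff] at h ⊢
  rintro (_ | m) hm
  · simp
  · have hcoeff := h m (by omega)
    rw [coeff_derivative, mul_comm, ← Nat.cast_succ, ← nsmul_eq_mul] at hcoeff
    rw [map_sub, coeff_C, if_neg m.succ_ne_zero, sub_zero]
    exact (nsmul_eq_zero_iff_right m.succ_ne_zero).mp hcoeff

theorem trunc_eq_trunc_of_X_pow_dvd_sub {R : Type*} [CommRing R] {f g : R⟦X⟧} {n : ℕ}
    (h : X ^ n ∣ f - g) : trunc n f = trunc n g := by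
  ext m
  rw [coeff_trunc, coeff_trunc]
  split_ifs with hm
  · rw [← sub_eq_zero, ← map_sub]
    exact X_pow_dvd_iff.mp h m hm
  · rfl

variable {K : Type*} [Field K]

noncomputable def logDeriv (f : K⟦X⟧) : K⟦X⟧ := derivative K f * f⁻¹

theorem logDeriv_one : logDeriv (1 : K⟦X⟧) = 0 := by
  rw [logDeriv, Derivation.map_one_eq_zero, zero_mul]

theorem logDeriv_mul {f g : K⟦X⟧} (hf : constantCoeff f ≠ 0) (hg : constantCoeff g ≠ 0) :
    logDeriv (f * g) = logDeriv f + logDeriv g := by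
  have hf' := PowerSeries.mul_inv_cancel f hf
  have hg' := PowerSeries.mul_inv_cancel g hg
  rw [logDeriv, logDeriv, logDeriv, Derivation.leibniz, PowerSeries.mul_inv_rev, smul_eq_mul,
    smul_eq_mul]
  linear_combination (derivative K g * g⁻¹) * hf' + (derivative K f * f⁻¹) * hg'

theorem logDeriv_pow {f : K⟦X⟧} (hf : constantCoeff f ≠ 0) (n : ℕ) :
    logDeriv (f ^ n) = n * logDeriv f := by
  induction n with
  | zero => rw [pow_zero, logDeriv_one, Nat.cast_zero, zero_mul]
  | succ n ih =>
    rw [pow_succ, logDeriv_mul (by simpa using pow_ne_zero n hf) hf, ih]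
    push_cast
    ring

theorem logDeriv_inv {f : K⟦X⟧} (hf : constantCoeff f ≠ 0) : logDeriv f⁻¹ = -logDeriv f := by
  have hf' : constantCoeff f⁻¹ ≠ 0 := by simpa [constantCoeff_inv] using hf
  have := logDeriv_mul hf hf'
  rw [PowerSeries.mul_inv_cancel f hf, logDeriv_one] at this
  linear_combination -this

theorem logDeriv_prod {ι : Type*} (s : Finset ι) (f : ι → K⟦X⟧)
    (hf : ∀ i ∈ s, constantCoeff (f i) ≠ 0) :
    logDeriv (∏ i ∈ s, f i) = ∑ i ∈ s, logDeriv (f i) := by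
  induction s using Finset.cons_induction with
  | empty => rw [prod_empty, sum_empty, logDeriv_one]
  | cons i s hi ih =>
    rw [forall_mem_cons] at hf
    rw [prod_cons, sum_cons, logDeriv_mul hf.1 (by simpa [map_prod, prod_eq_zero_iff] using hf.2),
      ih hf.2]

theorem X_pow_succ_dvd_sub_of_X_pow_dvd_logDeriv_sub [CharZero K] {f g : K⟦X⟧} {n : ℕ}
    (hg : constantCoeff g ≠ 0) (hfg : constantCoeff f = constantCoeff g)
    (h : X ^ n ∣ logDeriv f - logDeriv g) : X ^ (n + 1) ∣ f - g := by
  have hf : constantCoeff f ≠ 0 := hfg ▸ hg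
  have hg' : constantCoeff g⁻¹ ≠ 0 := by simpa [constantCoeff_inv] using hg
  set q := f * g⁻¹
  have hq : constantCoeff q = 1 := by
    rw [map_mul, constantCoeff_inv, hfg, mul_inv_cancel₀ hg]
  have hq' : derivative K q = (logDeriv f - logDeriv g) * q := by
    rw [sub_eq_add_neg, ← logDeriv_inv hg, ← logDeriv_mul hf hg', logDeriv, mul_assoc,
      PowerSeries.inv_mul_cancel q (by rw [hq]; exact one_ne_zero), mul_one]
  have hdvd := X_pow_succ_dvd_sub_C_of_X_pow_dvd_derivative (hq' ▸ dvd_mul_of_dvd_left h q)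
  rw [hq, map_one] at hdvd
  have hfq : f - g = (q - 1) * g := by
    rw [sub_mul, mul_assoc, PowerSeries.inv_mul_cancel g hg, mul_one, one_mul]
  exact hfq ▸ dvd_mul_of_dvd_left hdvd g

theorem inv_one_sub_C_mul_X_pow_eq_expand {j : ℕ} (hj : j ≠ 0) (c : K) :
    (1 - C c * X ^ j)⁻¹ = expand j hj (rescale c (mk 1)) := by
  rw [inv_eq_iff_mul_eq_one (by simp [zero_pow hj])]
  have : (1 - C c * X ^ j : K⟦X⟧) = expand j hj (rescale c (1 - X)) := by
    simp [rescale_X, expand_X, expand_C]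
  rw [this, ← map_mul, ← map_mul, mk_one_mul_one_sub_eq_one, map_one, map_one]

theorem constantCoeff_inv_one_sub_C_mul_X_pow {j : ℕ} (hj : j ≠ 0) (c : K) :
    constantCoeff (1 - C c * X ^ j)⁻¹ = 1 := by
  simp [constantCoeff_inv, zero_pow hj]

theorem coeff_inv_one_sub_C_mul_X_pow {j : ℕ} (hj : j ≠ 0) (c : K) (n : ℕ) :
    coeff n (1 - C c * X ^ j)⁻¹ = if j ∣ n then c ^ (n / j) else 0 := by
  rw [inv_one_sub_C_mul_X_pow_eq_expand hj, coeff_expand, coeff_rescale, coeff_mk, Pi.one_apply,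
    mul_one]

theorem X_mul_logDeriv_inv_one_sub_C_mul_X_pow {j : ℕ} (hj : j ≠ 0) (c : K) :
    X * logDeriv (1 - C c * X ^ j)⁻¹ = (j : K⟦X⟧) * ((1 - C c * X ^ j)⁻¹ - 1) := by
  set F : K⟦X⟧ := 1 - C c * X ^ j
  have hF : constantCoeff F ≠ 0 := by simp [F, zero_pow hj]
  have hFinv := PowerSeries.mul_inv_cancel F hF
  have hXj : X * X ^ (j - 1) = (X ^ j : K⟦X⟧) := by
    rw [← pow_succ', Nat.sub_add_cancel (Nat.pos_of_ne_zero hj)]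
  rw [logDeriv_inv hF, logDeriv]
  simp only [F, map_sub, Derivation.map_one_eq_zero, Derivation.leibniz, derivative_C,
    derivative_pow, derivative_X, smul_eq_mul]
  linear_combination (j * C c * F⁻¹) * hXj - j * hFinv

theorem X_mul_logDeriv_prod_pow_inv_one_sub_C_mul_X_pow (a : K) (m : ℕ → ℕ) (N : ℕ) :
    X * logDeriv (∏ j ∈ Icc 1 N, ((1 - C (a ^ j) * X ^ j)⁻¹) ^ m j) =
      ∑ j ∈ Icc 1 N, C ((j * m j : ℕ) : K) * ((1 - C (a ^ j) * X ^ j)⁻¹ - 1) := by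
  have hG {j : ℕ} (hj : j ∈ Icc 1 N) : constantCoeff (1 - C (a ^ j) * X ^ j)⁻¹ ≠ 0 := by
    rw [constantCoeff_inv_one_sub_C_mul_X_pow (by grind)]
    exact one_ne_zero
  rw [logDeriv_prod _ _ fun j hj => by rw [map_pow]; exact pow_ne_zero _ (hG hj), mul_sum]
  refine sum_congr rfl fun j hj => ?_
  rw [logDeriv_pow (hG hj), mul_left_comm, X_mul_logDeriv_inv_one_sub_C_mul_X_pow (by grind)]
  simp only [Nat.cast_mul, map_mul, map_natCast]
  ring

theorem coeff_sum_mul_inv_one_sub_C_mul_X_pow_sub_one (a : K) (m : ℕ → ℕ) {N n : ℕ}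
    (hn : n ≠ 0) (hnN : n ≤ N) :
    coeff n (∑ j ∈ Icc 1 N, C ((j * m j : ℕ) : K) * ((1 - C (a ^ j) * X ^ j)⁻¹ - 1)) =
      (∑ d ∈ n.divisors, (d : K) * m d) * a ^ n := by
  have hdiv : {j ∈ Icc 1 N | j ∣ n} = n.divisors := by
    ext d
    simp only [mem_filter, mem_Icc, Nat.mem_divisors]
    constructor
    · exact fun h => ⟨h.2, hn⟩
    · exact fun h => ⟨⟨Nat.pos_of_dvd_of_pos h.1 (Nat.pos_of_ne_zero hn),
        (Nat.le_of_dvd (Nat.pos_of_ne_zero hn) h.1).trans hnN⟩, h.1⟩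
  rw [map_sum, sum_mul, ← hdiv, sum_filter]
  refine sum_congr rfl fun j hj => ?_
  rw [coeff_C_mul, map_sub, coeff_one, if_neg hn, sub_zero,
    coeff_inv_one_sub_C_mul_X_pow (by grind)]
  split_ifs with hjn
  · rw [← pow_mul, Nat.mul_div_cancel' hjn]
    push_cast
    ring
  · rw [mul_zero]

theorem X_pow_succ_dvd_prod_inv_sub [CharZero K] (a b : K) (m : ℕ → ℕ) (N : ℕ)
    (hm : ∀ n ∈ Icc 1 N, ∑ d ∈ n.divisors, (d : K) * m d = b ^ n) :
    X ^ (N + 1) ∣ ∏ j ∈ Icc 1 N, ((1 - C (a ^ j) * X ^ j)⁻¹) ^ m j - (1 - C (a * b) * X)⁻¹ := by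
  have hQ : (1 - C (a * b) * X : K⟦X⟧)⁻¹ = (1 - C (a * b) * X ^ 1)⁻¹ := by rw [pow_one]
  rw [hQ]
  refine X_pow_succ_dvd_sub_of_X_pow_dvd_logDeriv_sub
    (by rw [constantCoeff_inv_one_sub_C_mul_X_pow one_ne_zero]; exact one_ne_zero) ?_ ?_
  · rw [map_prod, constantCoeff_inv_one_sub_C_mul_X_pow one_ne_zero]
    exact prod_eq_one fun j hj => by
      rw [map_pow, constantCoeff_inv_one_sub_C_mul_X_pow (by grind), one_pow]
  rw [← mul_dvd_mul_iff_left X_ne_zero, ← pow_succ', X_pow_dvd_iff]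
  rintro (_ | n) hn
  · exact coeff_zero_X_mul _
  · rw [mul_sub, X_mul_logDeriv_prod_pow_inv_one_sub_C_mul_X_pow,
      X_mul_logDeriv_inv_one_sub_C_mul_X_pow one_ne_zero, map_sub,
      coeff_sum_mul_inv_one_sub_C_mul_X_pow_sub_one a m (Nat.add_one_ne_zero n) (by omega),
      hm (n + 1) (by simp; omega), Nat.cast_one, one_mul, map_sub,
      coeff_inv_one_sub_C_mul_X_pow one_ne_zero, if_pos (one_dvd _), Nat.div_one, coeff_one,
      if_neg (Nat.add_one_ne_zero n)]
    ring

end PowerSeries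

/-- Since the factor for `j` is `1 + O(u^j)`, the infinite product is expressed through all its
truncations. -/
theorem necklace_product_identity (k : ℕ) (hk : 1 ≤ k) (N : ℕ) :
    PowerSeries.trunc N
        (∏ j ∈ Finset.Icc 1 N,
          ((1 - (PowerSeries.C (R := ℚ)) (((k : ℚ)) ⁻¹ ^ j) * PowerSeries.X ^ j)⁻¹) ^
            ((necklaceCount j k).toNat))
      = PowerSeries.trunc N ((1 - PowerSeries.X)⁻¹ : PowerSeries ℚ) := by
  have hdvd := PowerSeries.X_pow_succ_dvd_prod_inv_sub (k : ℚ)⁻¹ k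
    (fun j => (necklaceCount j k).toNat) N
    fun n hn => by exact_mod_cast sum_divisors_mul_toNat_necklaceCount (by grind) k
  rw [inv_mul_cancel₀ (Nat.cast_ne_zero.mpr (by omega)), map_one, one_mul] at hdvd
  exact PowerSeries.trunc_eq_trunc_of_X_pow_dvd_sub ((pow_dvd_pow _ N.le_succ).trans hdvd)
end
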